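/- arXiv:2101.02428 — 3 statements merged into one kernel-verified Lean document; each statement's English description precedes it below -/
import Mathlib

section
/- Let Ω ⊂ ℝ^k be open with Lebesgue measure μ, let ψ be a strictly increasing Young function satisfying condition Δ2 globally with lim_{t→0+} ψ(t)/t = 0 and lim_{t→∞} t/ψ(t) = 0, and let τ(t)=1/ψ(1/t) for t>0, τ(0)=0. Then for every measurable f : Ω → K (K ∈ {ℝ, ℂ}) one has ∫₀^∞ τ⁻¹(μ_f(s)) ds = ∫₀^∞ f*(τ(s)) ds, where μ_f is the distribution function of f and f* its non-increasing rearrangement. -/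
open MeasureTheory Filter Topology Set
open scoped ENNReal

/-- A (finite-valued) Young function: non-decreasing, left-continuous and convex on
`[0, ∞)`, with `ψ 0 = 0 = lim_{t→0+} ψ t` and `lim_{t→∞} ψ t = ∞`. -/
def IsYoung (ψ : ℝ → ℝ) : Prop :=
  MonotoneOn ψ (Set.Ici 0) ∧
  ConvexOn ℝ (Set.Ici 0) ψ ∧
  (∀ t : ℝ, 0 < t → Tendsto ψ (𝓝[<] t) (𝓝 (ψ t))) ∧
  ψ 0 = 0 ∧ Tendsto ψ (𝓝[>] 0) (𝓝 0) ∧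
  Tendsto ψ atTop atTop

/-- The Young function `ψ` satisfies condition `Δ₂` globally. -/
def Delta2 (ψ : ℝ → ℝ) : Prop :=
  ∃ d : ℝ, 1 < d ∧ ∀ t : ℝ, 0 < t → ψ (2 * t) ≤ d * ψ t

/-- The distribution function `μ_f(s) = μ {x ∈ Ω : |f x| > s}` of `f : Ω → 𝕜`. -/
noncomputable def distribFn {k : ℕ} {𝕜 : Type*} [RCLike 𝕜]
    (Ω : Set (EuclideanSpace ℝ (Fin k))) (f : EuclideanSpace ℝ (Fin k) → 𝕜)
    (s : ℝ) : ℝ≥0∞ :=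
  volume {x | x ∈ Ω ∧ s < ‖f x‖}

/-- The non-increasing rearrangement `f*(t) = inf {λ ∈ [0, ∞) : μ_f(λ) ≤ t}`
(with `inf ∅ = ∞`). -/
noncomputable def rearrFn {k : ℕ} {𝕜 : Type*} [RCLike 𝕜]
    (Ω : Set (EuclideanSpace ℝ (Fin k))) (f : EuclideanSpace ℝ (Fin k) → 𝕜)
    (t : ℝ) : ℝ≥0∞ :=
  sInf {y : ℝ≥0∞ | ∃ l : ℝ, 0 ≤ l ∧ y = ENNReal.ofReal l ∧
    distribFn Ω f l ≤ ENNReal.ofReal t}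

/-- The `[0, ∞]`-valued extension of `σ = τ⁻¹ : [0, ∞) → [0, ∞)`. -/
noncomputable def extInv (σ : ℝ → ℝ) : ℝ≥0∞ → ℝ≥0∞ :=
  fun a => if a = ∞ then ∞ else ENNReal.ofReal (σ a.toReal)

/-- With `ψ`, `τ`, `σ = τ⁻¹` as usual, for every measurable `f : Ω → 𝕜`
one has `∫₀^∞ τ⁻¹(μ_f(s)) ds = ∫₀^∞ f*(τ(s)) ds`. -/
theorem stmt9 {k : ℕ} {𝕜 : Type*} [RCLike 𝕜]
    (Ω : Set (EuclideanSpace ℝ (Fin k))) (hΩ : IsOpen Ω)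
    (ψ : ℝ → ℝ) (hY : IsYoung ψ) (hsm : StrictMonoOn ψ (Set.Ici 0)) (hΔ : Delta2 ψ)
    (h0 : Tendsto (fun t => ψ t / t) (𝓝[>] 0) (𝓝 0))
    (htop : Tendsto (fun t => t / ψ t) atTop (𝓝 0))
    (τ : ℝ → ℝ) (hτ0 : τ 0 = 0) (hτ : ∀ t : ℝ, 0 < t → τ t = 1 / ψ (1 / t))
    (σ : ℝ → ℝ) (hσ_nonneg : ∀ t : ℝ, 0 ≤ t → 0 ≤ σ t)
    (hσ_left : ∀ t : ℝ, 0 ≤ t → σ (τ t) = t)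
    (hσ_right : ∀ t : ℝ, 0 ≤ t → τ (σ t) = t)
    (f : EuclideanSpace ℝ (Fin k) → 𝕜) (hf : Measurable f) :
    ∫⁻ s in Set.Ioi (0 : ℝ), extInv σ (distribFn Ω f s) =
      ∫⁻ s in Set.Ioi (0 : ℝ), rearrFn Ω f (τ s) := by

  classical
  -- basic facts about ψ and τ
  have hψ0 : ψ 0 = 0 := hY.2.2.2.1
  have hψpos : ∀ t : ℝ, 0 < t → 0 < ψ t := by
    intro t ht
    have h := hsm Set.self_mem_Ici (Set.mem_Ici.mpr ht.le) ht
    rwa [hψ0] at h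
  have hτpos : ∀ t : ℝ, 0 < t → 0 < τ t := by
    intro t ht
    rw [hτ t ht]
    exact one_div_pos.mpr (hψpos _ (one_div_pos.mpr ht))
  have hτmono : StrictMonoOn τ (Set.Ici 0) := by
    intro a ha b hb hab
    rcases eq_or_lt_of_le (Set.mem_Ici.mp ha) with h0 | h0
    · rw [← h0, hτ0]
      exact hτpos b (h0 ▸ hab)
    · have hb0 : 0 < b := h0.trans hab
      rw [hτ a h0, hτ b hb0]
      have h1 : 1 / b < 1 / a := one_div_lt_one_div_of_lt h0 hab
      have h2 : ψ (1 / b) < ψ (1 / a) :=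
        hsm (Set.mem_Ici.mpr (one_div_pos.mpr hb0).le)
          (Set.mem_Ici.mpr (one_div_pos.mpr h0).le) h1
      exact one_div_lt_one_div_of_lt (hψpos _ (one_div_pos.mpr hb0)) h2
  have hσ0 : σ 0 = 0 := by
    have h := hσ_left 0 le_rfl
    rwa [hτ0] at h
  -- the distribution function is antitone, hence measurable
  have hD_anti : Antitone (distribFn Ω f) := fun s s' hss' =>
    measure_mono fun x hx => ⟨hx.1, lt_of_le_of_lt hss' hx.2⟩
  have hD : Measurable (distribFn Ω f) := hD_anti.measurable
  -- Step B : the rearrangement as a volume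
  have stepB : ∀ t : ℝ,
      rearrFn Ω f t = volume {l : ℝ | 0 < l ∧ ENNReal.ofReal t < distribFn Ω f l} := by
    intro t
    by_cases hNe : {l : ℝ | 0 ≤ l ∧ distribFn Ω f l ≤ ENNReal.ofReal t}.Nonempty
    · set L := {l : ℝ | 0 ≤ l ∧ distribFn Ω f l ≤ ENNReal.ofReal t} with hLdef
      have hbdd : BddBelow L := ⟨0, fun l hl => hl.1⟩
      have hm0 : 0 ≤ sInf L := le_csInf hNe fun l hl => hl.1
      have h1 : rearrFn Ω f t = ENNReal.ofReal (sInf L) := by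
        unfold rearrFn
        apply le_antisymm
        · apply ENNReal.le_of_forall_pos_le_add
          intro ε hε _
          obtain ⟨l, hlL, hlm⟩ :=
            Real.lt_sInf_add_pos hNe (show (0:ℝ) < ε by exact_mod_cast hε)
          calc sInf {y : ℝ≥0∞ | ∃ l : ℝ, 0 ≤ l ∧ y = ENNReal.ofReal l ∧
                  distribFn Ω f l ≤ ENNReal.ofReal t}
              ≤ ENNReal.ofReal l := sInf_le ⟨l, hlL.1, rfl, hlL.2⟩
            _ ≤ ENNReal.ofReal (sInf L + ε) := ENNReal.ofReal_le_ofReal hlm.le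
            _ = ENNReal.ofReal (sInf L) + ε := by
                rw [ENNReal.ofReal_add hm0 ε.coe_nonneg, ENNReal.ofReal_coe_nnreal]
        · apply le_sInf
          rintro y ⟨l, hl0, rfl, hlT⟩
          exact ENNReal.ofReal_le_ofReal (csInf_le hbdd ⟨hl0, hlT⟩)
      have hsub1 : Set.Ioo 0 (sInf L) ⊆
          {l : ℝ | 0 < l ∧ ENNReal.ofReal t < distribFn Ω f l} := by
        rintro l ⟨hl0, hlm⟩
        refine ⟨hl0, ?_⟩
        by_contra h
        push_neg at h
        exact absurd (csInf_le hbdd ⟨hl0.le, h⟩) (not_le.mpr hlm)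
      have hsub2 : {l : ℝ | 0 < l ∧ ENNReal.ofReal t < distribFn Ω f l} ⊆
          Set.Ioc 0 (sInf L) := by
        rintro l ⟨hl0, hlT⟩
        refine ⟨hl0, ?_⟩
        by_contra h
        push_neg at h
        obtain ⟨l', hl'L, hl'⟩ := exists_lt_of_csInf_lt hNe h
        exact absurd ((hD_anti hl'.le).trans hl'L.2) (not_le.mpr hlT)
      rw [h1]
      refine le_antisymm ?_ ?_
      · calc ENNReal.ofReal (sInf L) = volume (Set.Ioo 0 (sInf L)) := by
              rw [Real.volume_Ioo, sub_zero]
          _ ≤ _ := measure_mono hsub1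
      · calc volume {l : ℝ | 0 < l ∧ ENNReal.ofReal t < distribFn Ω f l}
              ≤ volume (Set.Ioc 0 (sInf L)) := measure_mono hsub2
          _ = ENNReal.ofReal (sInf L) := by rw [Real.volume_Ioc, sub_zero]
    · have hS : {y : ℝ≥0∞ | ∃ l : ℝ, 0 ≤ l ∧ y = ENNReal.ofReal l ∧
          distribFn Ω f l ≤ ENNReal.ofReal t} = ∅ := by
        ext y
        simp only [Set.mem_setOf_eq, Set.mem_empty_iff_false, iff_false]
        rintro ⟨l, hl0, _, hlT⟩
        exact hNe ⟨l, hl0, hlT⟩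
      have hV : {l : ℝ | 0 < l ∧ ENNReal.ofReal t < distribFn Ω f l} = Set.Ioi 0 := by
        ext l
        simp only [Set.mem_setOf_eq, Set.mem_Ioi]
        refine ⟨fun h => h.1, fun h => ⟨h, ?_⟩⟩
        by_contra hc
        push_neg at hc
        exact hNe ⟨l, h.le, hc⟩
      unfold rearrFn
      rw [hS, hV, sInf_empty, Real.volume_Ioi]
  -- Step C : extInv σ as a volume
  have stepC : ∀ a : ℝ≥0∞,
      extInv σ a = volume {u : ℝ | 0 < u ∧ ENNReal.ofReal (τ u) < a} := by
    intro a
    by_cases ha : a = ∞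
    · subst ha
      have hset : {u : ℝ | 0 < u ∧ ENNReal.ofReal (τ u) < ∞} = Set.Ioi 0 := by
        ext u
        simp [ENNReal.ofReal_lt_top]
      rw [hset, Real.volume_Ioi]
      simp [extInv]
    · have h1 : extInv σ a = ENNReal.ofReal (σ a.toReal) := by simp [extInv, ha]
      rcases eq_or_lt_of_le (ENNReal.toReal_nonneg (a := a)) with hc | hc
      · have ha0 : a = 0 := by
          rcases (ENNReal.toReal_eq_zero_iff a).mp hc.symm with h | h
          · exact h
          · exact absurd h ha
        subst ha0
        have hset : {u : ℝ | 0 < u ∧ ENNReal.ofReal (τ u) < 0} = ∅ := by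
          ext u
          simp
        rw [h1, hset]
        simp [hσ0]
      · have hac : ENNReal.ofReal a.toReal = a := ENNReal.ofReal_toReal ha
        have hσc : 0 ≤ σ a.toReal := hσ_nonneg _ ENNReal.toReal_nonneg
        have hset : {u : ℝ | 0 < u ∧ ENNReal.ofReal (τ u) < a} =
            Set.Ioo 0 (σ a.toReal) := by
          ext u
          simp only [Set.mem_setOf_eq, Set.mem_Ioo]
          constructor
          · rintro ⟨hu, hlt⟩
            refine ⟨hu, ?_⟩
            rw [← hac, ENNReal.ofReal_lt_ofReal_iff hc] at hlt
            rw [← hσ_right a.toReal ENNReal.toReal_nonneg] at hlt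
            exact (hτmono.lt_iff_lt (Set.mem_Ici.mpr hu.le) (Set.mem_Ici.mpr hσc)).mp hlt
          · rintro ⟨hu, hlt⟩
            refine ⟨hu, ?_⟩
            have h2 : τ u < τ (σ a.toReal) :=
              hτmono (Set.mem_Ici.mpr hu.le) (Set.mem_Ici.mpr hσc) hlt
            rw [hσ_right a.toReal ENNReal.toReal_nonneg] at h2
            rw [← hac]
            exact (ENNReal.ofReal_lt_ofReal_iff hc).mpr h2
        rw [h1, hset, Real.volume_Ioo, sub_zero]
  -- a measurable monotone extension of τ
  have hF_mono : Monotone (fun u : ℝ => if 0 < u then τ u else 0) := by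
    intro a b hab
    by_cases ha : 0 < a
    · have hb : 0 < b := lt_of_lt_of_le ha hab
      simp only [if_pos ha, if_pos hb]
      rcases eq_or_lt_of_le hab with h | h
      · rw [h]
      · exact (hτmono (Set.mem_Ici.mpr ha.le) (Set.mem_Ici.mpr hb.le) h).le
    · by_cases hb : 0 < b
      · simp only [if_pos hb, if_neg ha]
        exact (hτpos b hb).le
      · simp [ha, hb]
  set F : ℝ → ℝ := fun u : ℝ => if 0 < u then τ u else 0 with hFdef
  have hF_meas : Measurable F := hF_mono.measurable
  have hFeq : ∀ u : ℝ, 0 < u → F u = τ u := fun u hu => if_pos hu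
  -- inner integrals as volumes
  have key1 : ∀ c : ℝ≥0∞,
      (∫⁻ u in Set.Ioi (0:ℝ), (if ENNReal.ofReal (F u) < c then (1:ℝ≥0∞) else 0)) =
        volume {u : ℝ | 0 < u ∧ ENNReal.ofReal (τ u) < c} := by
    intro c
    have hTm : MeasurableSet {u : ℝ | ENNReal.ofReal (F u) < c} :=
      measurableSet_lt (ENNReal.measurable_ofReal.comp hF_meas) measurable_const
    have heq : (fun u : ℝ => if ENNReal.ofReal (F u) < c then (1:ℝ≥0∞) else 0) =
        Set.indicator {u : ℝ | ENNReal.ofReal (F u) < c} (fun _ => 1) := by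
      funext u
      simp [Set.indicator_apply]
    rw [heq, lintegral_indicator hTm, setLIntegral_one,
      Measure.restrict_apply hTm]
    congr 1
    ext u
    simp only [Set.mem_inter_iff, Set.mem_setOf_eq, Set.mem_Ioi]
    constructor
    · rintro ⟨h1, h2⟩
      exact ⟨h2, by rwa [hFeq u h2] at h1⟩
    · rintro ⟨h1, h2⟩
      exact ⟨by rwa [← hFeq u h1] at h2, h1⟩
  have key2 : ∀ u : ℝ,
      (∫⁻ l in Set.Ioi (0:ℝ),
          (if ENNReal.ofReal (F u) < distribFn Ω f l then (1:ℝ≥0∞) else 0)) =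
        volume {l : ℝ | 0 < l ∧ ENNReal.ofReal (F u) < distribFn Ω f l} := by
    intro u
    have hTm : MeasurableSet {l : ℝ | ENNReal.ofReal (F u) < distribFn Ω f l} :=
      measurableSet_lt measurable_const hD
    have heq : (fun l : ℝ => if ENNReal.ofReal (F u) < distribFn Ω f l
        then (1:ℝ≥0∞) else 0) =
        Set.indicator {l : ℝ | ENNReal.ofReal (F u) < distribFn Ω f l} (fun _ => 1) := by
      funext l
      simp [Set.indicator_apply]
    rw [heq, lintegral_indicator hTm, setLIntegral_one,
      Measure.restrict_apply hTm]
    congr 1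
    ext l
    simp only [Set.mem_inter_iff, Set.mem_setOf_eq, Set.mem_Ioi]
    tauto
  -- measurability on the product
  have hMeasG : Measurable (fun p : ℝ × ℝ =>
      if ENNReal.ofReal (F p.2) < distribFn Ω f p.1 then (1:ℝ≥0∞) else 0) := by
    refine Measurable.ite ?_ measurable_const measurable_const
    exact measurableSet_lt
      ((ENNReal.measurable_ofReal.comp hF_meas).comp measurable_snd)
      (hD.comp measurable_fst)
  -- put everything together
  calc (∫⁻ s in Set.Ioi (0:ℝ), extInv σ (distribFn Ω f s))
      = ∫⁻ s in Set.Ioi (0:ℝ), ∫⁻ u in Set.Ioi (0:ℝ),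
          (if ENNReal.ofReal (F u) < distribFn Ω f s then (1:ℝ≥0∞) else 0) := by
        refine lintegral_congr fun s => ?_
        rw [stepC (distribFn Ω f s), ← key1 (distribFn Ω f s)]
    _ = ∫⁻ u in Set.Ioi (0:ℝ), ∫⁻ s in Set.Ioi (0:ℝ),
          (if ENNReal.ofReal (F u) < distribFn Ω f s then (1:ℝ≥0∞) else 0) := by
        exact lintegral_lintegral_swap hMeasG.aemeasurable
    _ = ∫⁻ u in Set.Ioi (0:ℝ),
          volume {l : ℝ | 0 < l ∧ ENNReal.ofReal (F u) < distribFn Ω f l} := by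
        exact lintegral_congr fun u => key2 u
    _ = ∫⁻ s in Set.Ioi (0:ℝ), rearrFn Ω f (τ s) := by
        refine setLIntegral_congr_fun measurableSet_Ioi ?_
        intro s hs
        beta_reduce
        rw [stepB (τ s), hFeq s hs]
end

section
/- Let Ω ⊂ ℝ^k be open with Lebesgue measure μ, let ψ be a strictly increasing Young function satisfying condition Δ2 globally with lim_{t→0+} ψ(t)/t = 0 and lim_{t→∞} t/ψ(t) = 0, and let τ(t)=1/ψ(1/t) for t>0, τ(0)=0. Then for every measurable f : Ω → K one has ∫₀^∞ τ⁻¹(μ_f(s)) ds = ∫₀^∞ f*(s) (τ⁻¹)'(s) ds, where (τ⁻¹)' denotes the (almost everywhere defined) derivative of the locally Lipschitz function τ⁻¹. -/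
open MeasureTheory Filter Topology Set
open scoped ENNReal

section Aux
variable {ψ τ σ : ℝ → ℝ}

lemma aux_psi_pos (hsm : StrictMonoOn ψ (Set.Ici 0)) (hψ0 : ψ 0 = 0) {t : ℝ} (ht : 0 < t) :
    0 < ψ t := by
  have := hsm (Set.mem_Ici.2 le_rfl) (Set.mem_Ici.2 ht.le) ht
  simpa [hψ0] using this

lemma aux_tau_pos (hsm : StrictMonoOn ψ (Set.Ici 0)) (hψ0 : ψ 0 = 0)
    (hτ : ∀ t : ℝ, 0 < t → τ t = 1 / ψ (1 / t)) {t : ℝ} (ht : 0 < t) : 0 < τ t := by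
  rw [hτ t ht]
  exact one_div_pos.2 (aux_psi_pos hsm hψ0 (one_div_pos.2 ht))

lemma aux_tau_sm (hsm : StrictMonoOn ψ (Set.Ici 0)) (hψ0 : ψ 0 = 0) (hτ0 : τ 0 = 0)
    (hτ : ∀ t : ℝ, 0 < t → τ t = 1 / ψ (1 / t)) : StrictMonoOn τ (Set.Ici 0) := by
  intro x hx y hy hxy
  rcases eq_or_lt_of_le (Set.mem_Ici.1 hx) with h0 | h0
  · rw [← h0, hτ0]
    exact aux_tau_pos hsm hψ0 hτ (h0 ▸ hxy)
  · have hy0 : 0 < y := h0.trans hxy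
    rw [hτ x h0, hτ y hy0]
    have h1 : (1:ℝ)/y < 1/x := one_div_lt_one_div_of_lt h0 hxy
    have h2 : ψ (1/y) < ψ (1/x) :=
      hsm (Set.mem_Ici.2 (one_div_pos.2 hy0).le) (Set.mem_Ici.2 (one_div_pos.2 h0).le) h1
    exact one_div_lt_one_div_of_lt (aux_psi_pos hsm hψ0 (one_div_pos.2 hy0)) h2

lemma aux_sigma0 (hτ0 : τ 0 = 0) (hσ_left : ∀ t : ℝ, 0 ≤ t → σ (τ t) = t) : σ 0 = 0 := by
  have := hσ_left 0 le_rfl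
  rwa [hτ0] at this

lemma aux_sigma_mono (hsm : StrictMonoOn ψ (Set.Ici 0)) (hψ0 : ψ 0 = 0) (hτ0 : τ 0 = 0)
    (hτ : ∀ t : ℝ, 0 < t → τ t = 1 / ψ (1 / t))
    (hσ_nonneg : ∀ t : ℝ, 0 ≤ t → 0 ≤ σ t)
    (hσ_right : ∀ t : ℝ, 0 ≤ t → τ (σ t) = t) : MonotoneOn σ (Set.Ici 0) := by
  intro u hu v hv huv
  by_contra h
  push_neg at h
  have := aux_tau_sm hsm hψ0 hτ0 hτ (Set.mem_Ici.2 (hσ_nonneg v hv)) (Set.mem_Ici.2 (hσ_nonneg u hu)) h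
  rw [hσ_right u hu, hσ_right v hv] at this
  linarith

lemma aux_sigma_pos (hτ0 : τ 0 = 0)
    (hσ_nonneg : ∀ t : ℝ, 0 ≤ t → 0 ≤ σ t)
    (hσ_right : ∀ t : ℝ, 0 ≤ t → τ (σ t) = t) {t : ℝ} (ht : 0 < t) : 0 < σ t := by
  rcases lt_or_eq_of_le (hσ_nonneg t ht.le) with h | h
  · exact h
  · exfalso
    have := hσ_right t ht.le
    rw [← h, hτ0] at this
    linarith
end Aux

section Aux2
variable {ψ τ σ : ℝ → ℝ}

lemma aux_psi_pos' (hsm : StrictMonoOn ψ (Set.Ici 0)) (hψ0 : ψ 0 = 0) {t : ℝ} (ht : 0 < t) :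
    0 < ψ t := by
  have := hsm (Set.mem_Ici.2 le_rfl) (Set.mem_Ici.2 ht.le) ht
  simpa [hψ0] using this

/-- Local Lipschitz bound for `σ` on `[a,b] ⊆ (0,∞)`. -/
lemma aux_sigma_lip (hsm : StrictMonoOn ψ (Set.Ici 0)) (hconv : ConvexOn ℝ (Set.Ici 0) ψ)
    (hψ0 : ψ 0 = 0) (hτ0 : τ 0 = 0)
    (hτ : ∀ t : ℝ, 0 < t → τ t = 1 / ψ (1 / t))
    (hσ_nonneg : ∀ t : ℝ, 0 ≤ t → 0 ≤ σ t)
    (hσ_right : ∀ t : ℝ, 0 ≤ t → τ (σ t) = t)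
    (hσ_mono : MonotoneOn σ (Set.Ici 0))
    (hσ_pos : ∀ t : ℝ, 0 < t → 0 < σ t)
    {a b : ℝ} (ha : 0 < a) (hab : a ≤ b) :
    ∃ K : ℝ, 0 < K ∧ ∀ u v : ℝ, a ≤ u → u ≤ v → v ≤ b → σ v - σ u ≤ K * (v - u) := by
  set A := σ a with hA
  set B := σ b with hB
  have hA0 : 0 < A := hσ_pos a ha
  have hAB : A ≤ B := hσ_mono (Set.mem_Ici.2 ha.le) (Set.mem_Ici.2 (ha.trans_le hab).le) hab
  have hB0 : 0 < B := hA0.trans_le hAB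
  set m : ℝ := 1 / B with hm
  have hm0 : 0 < m := one_div_pos.2 hB0
  set c₀ : ℝ := (ψ m - ψ (m / 2)) / (m - m / 2) with hc₀
  have hc₀0 : 0 < c₀ := by
    apply div_pos
    · have := hsm (Set.mem_Ici.2 (by linarith : (0:ℝ) ≤ m / 2)) (Set.mem_Ici.2 hm0.le)
        (by linarith)
      linarith
    · linarith
  set ψA : ℝ := ψ (1 / A) with hψA
  have hψA0 : 0 < ψA := aux_psi_pos' hsm hψ0 (one_div_pos.2 hA0)
  refine ⟨B ^ 2 * ψA ^ 2 / c₀, by positivity, fun u v hau huv hvb => ?_⟩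
  have hu0 : 0 < u := ha.trans_le hau
  have hv0 : 0 < v := hu0.trans_le huv
  set x := σ u with hx
  set y := σ v with hy
  have hx0 : 0 < x := hσ_pos u hu0
  have hAx : A ≤ x := hσ_mono (Set.mem_Ici.2 ha.le) (Set.mem_Ici.2 hu0.le) hau
  have hxy : x ≤ y := hσ_mono (Set.mem_Ici.2 hu0.le) (Set.mem_Ici.2 hv0.le) huv
  have hyB : y ≤ B := hσ_mono (Set.mem_Ici.2 hv0.le) (Set.mem_Ici.2 (ha.trans_le hab).le) hvb
  have hy0 : 0 < y := hx0.trans_le hxy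
  rcases eq_or_lt_of_le hxy with heq | hlt
  · rw [← heq]
    have : (0:ℝ) ≤ (B ^ 2 * ψA ^ 2 / c₀) * (v - u) := by
      apply mul_nonneg (by positivity); linarith
    linarith
  -- now x < y
  have hu_eq : u = τ x := (hσ_right u hu0.le).symm
  have hv_eq : v = τ y := (hσ_right v hv0.le).symm
  set p : ℝ := 1 / y with hp
  set q : ℝ := 1 / x with hq
  have hp0 : 0 < p := one_div_pos.2 hy0
  have hq0 : 0 < q := one_div_pos.2 hx0
  have hpq : p < q := one_div_lt_one_div_of_lt hx0 hlt
  have hmp : m ≤ p := by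
    rw [hm, hp]
    exact one_div_le_one_div_of_le hy0 hyB
  have hqA : q ≤ 1 / A := by
    rw [hq]
    exact one_div_le_one_div_of_le hA0 hAx
  have hpA : p ≤ 1 / A := le_trans hpq.le hqA
  have hψp0 : 0 < ψ p := aux_psi_pos' hsm hψ0 hp0
  have hψq0 : 0 < ψ q := aux_psi_pos' hsm hψ0 hq0
  have hψpA : ψ p ≤ ψA := by
    rcases eq_or_lt_of_le hpA with h | h
    · rw [hψA, ← h]
    · exact (hsm (Set.mem_Ici.2 hp0.le) (Set.mem_Ici.2 (by positivity)) h).le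
  have hψqA : ψ q ≤ ψA := by
    rcases eq_or_lt_of_le hqA with h | h
    · rw [hψA, ← h]
    · exact (hsm (Set.mem_Ici.2 hq0.le) (Set.mem_Ici.2 (by positivity)) h).le
  -- convexity slope bound: c₀ ≤ (ψ q - ψ p) / (q - p)
  have hslope : c₀ ≤ (ψ q - ψ p) / (q - p) := by
    have hm2 : (0:ℝ) ≤ m / 2 := by linarith
    have s1 : (ψ m - ψ (m/2)) / (m - m/2) ≤ (ψ q - ψ (m/2)) / (q - m/2) :=
      hconv.secant_mono_aux2 (Set.mem_Ici.2 hm2) (Set.mem_Ici.2 hq0.le)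
        (by linarith) (by linarith)
    have s2 : (ψ q - ψ (m/2)) / (q - m/2) ≤ (ψ q - ψ p) / (q - p) :=
      hconv.secant_mono_aux3 (Set.mem_Ici.2 hm2) (Set.mem_Ici.2 hq0.le)
        (by linarith) hpq
    calc c₀ = (ψ m - ψ (m/2)) / (m - m/2) := hc₀
    _ ≤ _ := le_trans s1 s2
  have h1 : c₀ * (q - p) ≤ ψ q - ψ p := by
    rw [le_div_iff₀ (by linarith : (0:ℝ) < q - p)] at hslope
    linarith [hslope]
  have h2 : v - u = (ψ q - ψ p) / (ψ p * ψ q) := by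
    rw [hu_eq, hv_eq, hτ x hx0, hτ y hy0]
    rw [hp, hq] at *
    field_simp
  have h3 : (q - p) * (x * y) = y - x := by
    rw [hp, hq]
    field_simp
  -- key inequality
  have k1 : c₀ * (y - x) ≤ (ψ q - ψ p) * (x * y) := by
    calc c₀ * (y - x) = (c₀ * (q - p)) * (x * y) := by rw [← h3]; ring
    _ ≤ (ψ q - ψ p) * (x * y) := by
        apply mul_le_mul_of_nonneg_right h1 (by positivity)
  have k2 : x * y * (ψ p * ψ q) ≤ B ^ 2 * ψA ^ 2 := by
    have hxB : x ≤ B := hxy.trans hyB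
    have e1 : x * y ≤ B * B := mul_le_mul hxB hyB hy0.le hB0.le
    have e2 : ψ p * ψ q ≤ ψA * ψA := mul_le_mul hψpA hψqA hψq0.le hψA0.le
    calc x * y * (ψ p * ψ q) ≤ (B * B) * (ψA * ψA) :=
          mul_le_mul e1 e2 (by positivity) (by positivity)
    _ = B ^ 2 * ψA ^ 2 := by ring
  have key : (y - x) * (ψ p * ψ q) * c₀ ≤ (ψ q - ψ p) * (B ^ 2 * ψA ^ 2) := by
    have hψpq0 : (0:ℝ) ≤ ψ p * ψ q := by positivity
    have t1 : (y - x) * (ψ p * ψ q) * c₀ ≤ ((ψ q - ψ p) * (x * y)) * (ψ p * ψ q) := by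
      calc (y - x) * (ψ p * ψ q) * c₀ = (c₀ * (y - x)) * (ψ p * ψ q) := by ring
      _ ≤ _ := mul_le_mul_of_nonneg_right k1 hψpq0
    have hψqp : 0 ≤ ψ q - ψ p := by
      have := hsm (Set.mem_Ici.2 hp0.le) (Set.mem_Ici.2 hq0.le) hpq
      linarith
    have t2 : ((ψ q - ψ p) * (x * y)) * (ψ p * ψ q) ≤ (ψ q - ψ p) * (B ^ 2 * ψA ^ 2) := by
      calc ((ψ q - ψ p) * (x * y)) * (ψ p * ψ q) = (ψ q - ψ p) * (x * y * (ψ p * ψ q)) := by ring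
      _ ≤ _ := mul_le_mul_of_nonneg_left k2 hψqp
    linarith
  -- conclude
  show y - x ≤ B ^ 2 * ψA ^ 2 / c₀ * (v - u)
  rw [h2]
  have hrw : B ^ 2 * ψA ^ 2 / c₀ * ((ψ q - ψ p) / (ψ p * ψ q))
      = ((ψ q - ψ p) * (B ^ 2 * ψA ^ 2)) / (c₀ * (ψ p * ψ q)) := by
    field_simp
  rw [hrw, le_div_iff₀ (by positivity)]
  calc (y - x) * (c₀ * (ψ p * ψ q)) = (y - x) * (ψ p * ψ q) * c₀ := by ring
  _ ≤ _ := key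
end Aux2

noncomputable def mkSt (g : ℝ → ℝ) (h1 : Monotone g) (h2 : Continuous g) : StieltjesFunction ℝ :=
  ⟨g, h1, fun _ => (h2.continuousAt).continuousWithinAt⟩

@[simp] lemma mkSt_apply (g : ℝ → ℝ) (h1 : Monotone g) (h2 : Continuous g) (x : ℝ) :
    mkSt g h1 h2 x = g x := rfl

noncomputable def stF (σ : ℝ → ℝ) (hσ_mono : MonotoneOn σ (Set.Ici 0))
    (hcont : ContinuousOn σ (Set.Ici 0)) : StieltjesFunction ℝ :=
  mkSt (fun x => σ (max x 0))
    (fun x y h => hσ_mono (Set.mem_Ici.2 (le_max_right x 0)) (Set.mem_Ici.2 (le_max_right y 0))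
      (max_le_max h le_rfl))
    (hcont.comp_continuous (continuous_id.max continuous_const)
      (fun x => Set.mem_Ici.2 (le_max_right x 0)))

@[simp] lemma stF_apply (σ : ℝ → ℝ) (h1 : MonotoneOn σ (Set.Ici 0))
    (h2 : ContinuousOn σ (Set.Ici 0)) (x : ℝ) : stF σ h1 h2 x = σ (max x 0) := rfl

section Aux4
variable {σ : ℝ → ℝ}

lemma aux_F_ac
    (hσ0 : σ 0 = 0)
    (hσ_mono : MonotoneOn σ (Set.Ici 0))
    (hcont : ContinuousOn σ (Set.Ici 0))
    (hlip : ∀ a b : ℝ, 0 < a → a ≤ b →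
      ∃ K : ℝ, 0 < K ∧ ∀ u v : ℝ, a ≤ u → u ≤ v → v ≤ b → σ v - σ u ≤ K * (v - u)) :
    (stF σ hσ_mono hcont).measure ≪ (volume : Measure ℝ) := by
  set F := stF σ hσ_mono hcont with hF
  -- the key local estimate
  have key : ∀ s : Set ℝ, MeasurableSet s → volume s = 0 → ∀ a b : ℝ, 0 < a → a ≤ b →
      F.measure (s ∩ Ioc a b) = 0 := by
    intro s hs hs0 a b ha hab
    obtain ⟨K, hK0, hK⟩ := hlip a b ha hab
    set cl : ℝ → ℝ := fun x => max a (min x b) with hcl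
    have hcl1 : ∀ x, a ≤ cl x := fun x => le_max_left _ _
    have hcl2 : ∀ x, cl x ≤ b := fun x => max_le hab (min_le_right x b)
    have hcl0 : ∀ x, 0 < cl x := fun x => lt_of_lt_of_le ha (hcl1 x)
    have hclm : Monotone cl := fun x y h => max_le_max le_rfl (min_le_min h le_rfl)
    have hclc : Continuous cl := continuous_const.max (continuous_id.min continuous_const)
    have Φm : Monotone (fun x => σ (cl x)) := fun x y h =>
      hσ_mono (Set.mem_Ici.2 (hcl0 x).le) (Set.mem_Ici.2 (hcl0 y).le) (hclm h)
    have Φc : Continuous (fun x => σ (cl x)) :=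
      hcont.comp_continuous hclc (fun x => Set.mem_Ici.2 (hcl0 x).le)
    set Φ := mkSt _ Φm Φc with hΦ
    have Gm : Monotone (fun x => K * cl x - σ (cl x)) := by
      intro x y h
      dsimp only
      have := hK (cl x) (cl y) (hcl1 x) (hclm h) (hcl2 y)
      linarith
    have Gc : Continuous (fun x => K * cl x - σ (cl x)) := (continuous_const.mul hclc).sub Φc
    set G := mkSt _ Gm Gc with hG
    have Λm : Monotone (fun x => K * cl x) := fun x y h =>
      mul_le_mul_of_nonneg_left (hclm h) hK0.le
    have Λc : Continuous (fun x => K * cl x) := continuous_const.mul hclc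
    set Λ := mkSt _ Λm Λc with hΛ
    have h1 : Λ.measure = Φ.measure + G.measure := by
      refine Measure.ext_of_Ioc _ _ fun u v huv => ?_
      rw [StieltjesFunction.measure_Ioc, Measure.add_apply, StieltjesFunction.measure_Ioc,
        StieltjesFunction.measure_Ioc]
      simp only [hΛ, hΦ, hG, mkSt_apply]
      have e1 : (0:ℝ) ≤ σ (cl v) - σ (cl u) := sub_nonneg.2 (Φm huv.le)
      have e2 : (0:ℝ) ≤ (K * cl v - σ (cl v)) - (K * cl u - σ (cl u)) := sub_nonneg.2 (Gm huv.le)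
      rw [← ENNReal.ofReal_add e1 e2]
      congr 1
      ring
    have h2 : Λ.measure = (ENNReal.ofReal K) • (volume.restrict (Ioc a b)) := by
      refine Measure.ext_of_Ioc _ _ fun u v huv => ?_
      rw [StieltjesFunction.measure_Ioc, Measure.smul_apply, smul_eq_mul,
        Measure.restrict_apply measurableSet_Ioc, Set.Ioc_inter_Ioc, Real.volume_Ioc]
      simp only [hΛ, mkSt_apply]
      have hrw : K * cl v - K * cl u = K * (cl v - cl u) := by ring
      rw [hrw, ENNReal.ofReal_mul hK0.le]
      congr 1
      rcases le_total v a with h | h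
      · have hcv : cl v = a := max_eq_left (le_trans (min_le_left v b) h)
        have hcu : cl u = a := max_eq_left (le_trans (min_le_left u b) (le_trans huv.le h))
        rw [hcv, hcu, sub_self, ENNReal.ofReal_zero]
        symm
        rw [ENNReal.ofReal_eq_zero]
        have h1 : v ⊓ b ≤ v := inf_le_left
        have h2 : a ≤ u ⊔ a := le_sup_right
        linarith
      · rcases le_total b u with h' | h'
        · have hcu : cl u = b := by
            rw [hcl]
            dsimp only
            rw [min_eq_right h', max_eq_right hab]
          have hcv : cl v = b := by
            rw [hcl]
            dsimp only
            rw [min_eq_right (le_trans h' huv.le), max_eq_right hab]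
          rw [hcv, hcu, sub_self, ENNReal.ofReal_zero]
          symm
          rw [ENNReal.ofReal_eq_zero]
          have h1 : v ⊓ b ≤ b := inf_le_right
          have h2 : u ≤ u ⊔ a := le_sup_left
          linarith
        · have hcv : cl v = v ⊓ b := max_eq_right (le_inf h hab)
          have hcu : cl u = u ⊔ a := by
            rw [hcl]
            dsimp only
            rw [min_eq_left h', max_comm, sup_comm]
          rw [hcv, hcu]
    have h3 : Φ.measure = F.measure.restrict (Ioc a b) := by
      refine Measure.ext_of_Ioc _ _ fun u v huv => ?_
      rw [StieltjesFunction.measure_Ioc, Measure.restrict_apply measurableSet_Ioc,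
        Set.Ioc_inter_Ioc, StieltjesFunction.measure_Ioc]
      simp only [hΦ, hF, mkSt_apply, stF_apply]
      rcases le_total v a with h | h
      · have hcv : cl v = a := max_eq_left (le_trans (min_le_left v b) h)
        have hcu : cl u = a := max_eq_left (le_trans (min_le_left u b) (le_trans huv.le h))
        rw [hcv, hcu, sub_self, ENNReal.ofReal_zero]
        symm
        rw [ENNReal.ofReal_eq_zero]
        have hle : v ⊓ b ≤ u ⊔ a := le_trans inf_le_left (le_trans h le_sup_right)
        have := hσ_mono (Set.mem_Ici.2 (le_max_right (v ⊓ b) 0))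
          (Set.mem_Ici.2 (le_max_right (u ⊔ a) 0)) (max_le_max hle le_rfl)
        linarith
      · rcases le_total b u with h' | h'
        · have hcu : cl u = b := by
            rw [hcl]; dsimp only; rw [min_eq_right h', max_eq_right hab]
          have hcv : cl v = b := by
            rw [hcl]; dsimp only; rw [min_eq_right (le_trans h' huv.le), max_eq_right hab]
          rw [hcv, hcu, sub_self, ENNReal.ofReal_zero]
          symm
          rw [ENNReal.ofReal_eq_zero]
          have hle : v ⊓ b ≤ u ⊔ a := le_trans inf_le_right (le_trans h' le_sup_left)
          have := hσ_mono (Set.mem_Ici.2 (le_max_right (v ⊓ b) 0))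
            (Set.mem_Ici.2 (le_max_right (u ⊔ a) 0)) (max_le_max hle le_rfl)
          linarith
        · have hcv : cl v = v ⊓ b := max_eq_right (le_inf h hab)
          have hcu : cl u = u ⊔ a := by
            rw [hcl]; dsimp only; rw [min_eq_left h', max_comm, sup_comm]
          have hvb0 : (0:ℝ) ≤ v ⊓ b := (le_inf (ha.le.trans h) (ha.le.trans hab))
          have hua0 : (0:ℝ) ≤ u ⊔ a := le_trans ha.le le_sup_right
          rw [hcv, hcu, max_eq_left hvb0, max_eq_left hua0]
    -- put everything together
    have step1 : F.measure (s ∩ Ioc a b) = Φ.measure (s ∩ Ioc a b) := by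
      rw [h3, Measure.restrict_apply (hs.inter measurableSet_Ioc), Set.inter_assoc,
        Set.inter_self]
    have step2 : Φ.measure (s ∩ Ioc a b) ≤ Λ.measure (s ∩ Ioc a b) := by
      rw [h1]
      exact Measure.le_iff'.1 (Measure.le_add_right le_rfl) _
    have step3 : Λ.measure (s ∩ Ioc a b) = 0 := by
      rw [h2, Measure.smul_apply, smul_eq_mul,
        Measure.restrict_apply (hs.inter measurableSet_Ioc)]
      have : volume ((s ∩ Ioc a b) ∩ Ioc a b) = 0 :=
        measure_mono_null (le_trans Set.inter_subset_left Set.inter_subset_left) hs0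
      rw [this, mul_zero]
    rw [step1]
    exact le_antisymm (step2.trans step3.le) zero_le
  -- conclude absolute continuity
  refine Measure.AbsolutelyContinuous.mk fun s hs hs0 => ?_
  have hIic : F.measure (Iic 0) = 0 := by
    have hF0 : ∀ x : ℝ, x ≤ 0 → F x = 0 := fun x hx => by
      rw [hF, stF_apply, max_eq_right hx, hσ0]
    have htb : Tendsto (F : ℝ → ℝ) atBot (𝓝 0) := by
      refine tendsto_const_nhds.congr' ?_
      filter_upwards [Iic_mem_atBot 0] with x hx
      exact (hF0 x hx).symm
    rw [StieltjesFunction.measure_Iic F htb, hF0 0 le_rfl, sub_zero, ENNReal.ofReal_zero]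
  have hsub : s ⊆ Iic 0 ∪ ⋃ n : ℕ, s ∩ Ioc (1/(n+1) : ℝ) ((n:ℝ)+1) := by
    intro z hz
    rcases le_or_gt z 0 with h | h
    · exact Or.inl h
    · right
      obtain ⟨n, hn⟩ := exists_nat_gt (max (1/z) z)
      refine Set.mem_iUnion.2 ⟨n, hz, ?_, ?_⟩
      · have h1 : 1/z < (n:ℝ)+1 := lt_of_le_of_lt (le_max_left _ _) (hn.trans (by linarith))
        have hn1 : (0:ℝ) < (n:ℝ)+1 := by positivity
        rw [div_lt_iff₀ hn1] at *
        rw [div_lt_iff₀ h] at h1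
        nlinarith
      · have := lt_of_le_of_lt (le_max_right (1/z) z) hn
        linarith
  refine le_antisymm ?_ zero_le
  calc F.measure s ≤ F.measure (Iic 0 ∪ ⋃ n : ℕ, s ∩ Ioc (1/(n+1) : ℝ) ((n:ℝ)+1)) :=
        measure_mono hsub
  _ ≤ F.measure (Iic 0) + F.measure (⋃ n : ℕ, s ∩ Ioc (1/(n+1) : ℝ) ((n:ℝ)+1)) :=
        measure_union_le _ _
  _ ≤ 0 + ∑' n : ℕ, F.measure (s ∩ Ioc (1/(n+1) : ℝ) ((n:ℝ)+1)) := by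
        rw [hIic]
        exact add_le_add le_rfl (measure_iUnion_le _)
  _ ≤ 0 := by
        have : ∀ n : ℕ, F.measure (s ∩ Ioc (1/(n+1) : ℝ) ((n:ℝ)+1)) = 0 := by
          intro n
          apply key s hs hs0
          · positivity
          · have h1 : (1:ℝ) ≤ (n:ℝ)+1 := by
              have := Nat.cast_nonneg (α := ℝ) n
              linarith
            calc (1:ℝ)/((n:ℝ)+1) ≤ 1 := by
                  rw [div_le_one (by positivity)]
                  exact h1
            _ ≤ (n:ℝ)+1 := h1
        simp only [this, tsub_zero]
        simp
end Aux4

section Aux3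
variable {σ : ℝ → ℝ}

/-- continuity of σ on [0,∞) from the local Lipschitz property + behavior at 0. -/
lemma aux_sigma_cont
    (hσ0 : σ 0 = 0)
    (hσ_mono : MonotoneOn σ (Set.Ici 0))
    (hσ_nonneg : ∀ t : ℝ, 0 ≤ t → 0 ≤ σ t)
    (hsmall : ∀ ε : ℝ, 0 < ε → ∃ δ : ℝ, 0 < δ ∧ σ δ ≤ ε)
    (hlip : ∀ a b : ℝ, 0 < a → a ≤ b →
      ∃ K : ℝ, 0 < K ∧ ∀ u v : ℝ, a ≤ u → u ≤ v → v ≤ b → σ v - σ u ≤ K * (v - u)) :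
    ContinuousOn σ (Set.Ici 0) := by
  intro x hx
  rw [Metric.continuousWithinAt_iff]
  intro ε hε
  rcases eq_or_lt_of_le (Set.mem_Ici.1 hx) with h0 | h0
  · -- x = 0
    obtain ⟨δ, hδ0, hδ⟩ := hsmall (ε/2) (by linarith)
    refine ⟨δ, hδ0, fun y hy hyd => ?_⟩
    have hy0 : 0 ≤ y := Set.mem_Ici.1 hy
    have h1 : σ y ≤ ε/2 := by
      rcases le_total y δ with h | h
      · exact le_trans (hσ_mono (Set.mem_Ici.2 hy0) (Set.mem_Ici.2 hδ0.le) h) hδ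
      · exfalso
        rw [Real.dist_eq, ← h0, sub_zero, abs_of_nonneg hy0] at hyd
        linarith
    rw [Real.dist_eq, ← h0, hσ0, sub_zero, abs_of_nonneg (hσ_nonneg y hy0)]
    linarith
  · -- x > 0
    obtain ⟨K, hK0, hK⟩ := hlip (x/2) (x+1) (by linarith) (by linarith)
    refine ⟨min (x/2) (min 1 (ε/(2*K))), by positivity, fun y hy hyd => ?_⟩
    have hd1 : |y - x| < x/2 := lt_of_lt_of_le (by rw [← Real.dist_eq]; exact hyd) (min_le_left _ _)
    have hd2 : |y - x| < 1 := lt_of_lt_of_le (by rw [← Real.dist_eq]; exact hyd)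
      ((min_le_right _ _).trans (min_le_left _ _))
    have hd3 : |y - x| < ε/(2*K) := lt_of_lt_of_le (by rw [← Real.dist_eq]; exact hyd)
      ((min_le_right _ _).trans (min_le_right _ _))
    have hya : x/2 ≤ y := by
      have := abs_lt.1 hd1
      linarith [this.1]
    have hyb : y ≤ x + 1 := by
      have := abs_lt.1 hd2
      linarith [this.2]
    have hxa : x/2 ≤ x := by linarith
    have hxb : x ≤ x + 1 := by linarith
    have key : |σ y - σ x| ≤ K * |y - x| := by
      rcases le_total y x with h | h
      · have h1 := hK y x hya h hxb
        have h2 : σ y ≤ σ x := hσ_mono (Set.mem_Ici.2 (by linarith)) (Set.mem_Ici.2 h0.le) h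
        rw [abs_of_nonpos (by linarith), abs_of_nonpos (by linarith)]
        linarith
      · have h1 := hK x y hxa h hyb
        have h2 : σ x ≤ σ y := hσ_mono (Set.mem_Ici.2 h0.le) (Set.mem_Ici.2 (by linarith)) h
        rw [abs_of_nonneg (by linarith), abs_of_nonneg (by linarith)]
        linarith
    rw [Real.dist_eq]
    calc |σ y - σ x| ≤ K * |y - x| := key
    _ < K * (ε/(2*K)) := by
        apply mul_lt_mul_of_pos_left hd3 hK0
    _ = ε/2 := by field_simp
    _ < ε := by linarith

end Aux3

section Aux5
variable {σ : ℝ → ℝ}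

/-- Fundamental theorem of calculus for `σ` on `[0, c]`. -/
lemma aux_ftc (hσ0 : σ 0 = 0)
    (hσ_mono : MonotoneOn σ (Set.Ici 0)) (hcont : ContinuousOn σ (Set.Ici 0))
    (hac : (stF σ hσ_mono hcont).measure ≪ (volume : Measure ℝ))
    {c : ℝ} (hc : 0 ≤ c) :
    ∫⁻ t in Set.Ioo (0:ℝ) c, ENNReal.ofReal (deriv σ t) = ENNReal.ofReal (σ c) := by
  set F := stF σ hσ_mono hcont with hF
  have hFc : Continuous (F : ℝ → ℝ) :=
    hcont.comp_continuous (continuous_id.max continuous_const)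
      (fun x => Set.mem_Ici.2 (le_max_right x 0))
  have hderiv : ∀ᵐ t : ℝ, t ∈ Set.Ioi (0:ℝ) →
      ENNReal.ofReal (deriv σ t) = F.measure.rnDeriv volume t := by
    filter_upwards [F.ae_hasDerivAt, Measure.rnDeriv_lt_top F.measure volume] with t ht hlt htpos
    have hev : (F : ℝ → ℝ) =ᶠ[𝓝 t] σ := by
      filter_upwards [Ioi_mem_nhds htpos] with x hx
      show σ (max x 0) = σ x
      rw [max_eq_left (le_of_lt hx)]
    have ht' : HasDerivAt σ ((F.measure.rnDeriv volume t).toReal) t :=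
      ht.congr_of_eventuallyEq hev.symm
    rw [ht'.deriv, ENNReal.ofReal_toReal hlt.ne]
  have h1 : ∫⁻ t in Set.Ioo (0:ℝ) c, ENNReal.ofReal (deriv σ t)
      = ∫⁻ t in Set.Ioo (0:ℝ) c, F.measure.rnDeriv volume t := by
    refine setLIntegral_congr_fun_ae measurableSet_Ioo ?_
    filter_upwards [hderiv] with t ht h2
    exact ht h2.1
  have h2 : ∫⁻ t in Set.Ioo (0:ℝ) c, F.measure.rnDeriv volume t = F.measure (Set.Ioo 0 c) :=
    Measure.setLIntegral_rnDeriv hac _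
  have h3 : F.measure (Set.Ioo 0 c) = ENNReal.ofReal (σ c) := by
    rw [StieltjesFunction.measure_Ioo]
    have hll : Function.leftLim (F : ℝ → ℝ) c = F c :=
      leftLim_eq_of_tendsto
        ((hFc.tendsto c).mono_left nhdsWithin_le_nhds)
    have hFc0 : (F : ℝ → ℝ) c = σ c := by
      show σ (max c 0) = σ c
      rw [max_eq_left hc]
    have hF00 : (F : ℝ → ℝ) 0 = 0 := by
      show σ (max 0 0) = 0
      rw [max_self, hσ0]
    rw [hll, hFc0, hF00, sub_zero]
  rw [h1, h2, h3]

/-- The total integral of `deriv σ` over `(0,∞)` is infinite. -/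
lemma aux_int_top {τ : ℝ → ℝ} (hσ0 : σ 0 = 0)
    (hσ_mono : MonotoneOn σ (Set.Ici 0)) (hcont : ContinuousOn σ (Set.Ici 0))
    (hac : (stF σ hσ_mono hcont).measure ≪ (volume : Measure ℝ))
    (hτ_nonneg : ∀ t : ℝ, 0 ≤ t → 0 ≤ τ t)
    (hσ_left : ∀ t : ℝ, 0 ≤ t → σ (τ t) = t) :
    ∫⁻ t in Set.Ioi (0:ℝ), ENNReal.ofReal (deriv σ t) = ∞ := by
  refine ENNReal.eq_top_of_forall_nnreal_le fun r => ?_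
  have hr0 : (0:ℝ) ≤ (r:ℝ) := r.coe_nonneg
  have hτr : 0 ≤ τ (r:ℝ) := hτ_nonneg _ hr0
  calc (r : ℝ≥0∞) = ENNReal.ofReal (σ (τ (r:ℝ))) := by
        rw [hσ_left _ hr0, ENNReal.ofReal_coe_nnreal]
  _ = ∫⁻ t in Set.Ioo (0:ℝ) (τ (r:ℝ)), ENNReal.ofReal (deriv σ t) :=
        (aux_ftc hσ0 hσ_mono hcont hac hτr).symm
  _ ≤ ∫⁻ t in Set.Ioi (0:ℝ), ENNReal.ofReal (deriv σ t) :=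
        lintegral_mono_set Set.Ioo_subset_Ioi_self

end Aux5

section Aux6

/-- The layer-cake identity between the distribution function and the rearrangement. -/
lemma aux_rearr {k : ℕ} {𝕜 : Type*} [RCLike 𝕜]
    (Ω : Set (EuclideanSpace ℝ (Fin k))) (f : EuclideanSpace ℝ (Fin k) → 𝕜) (t : ℝ) :
    volume ({s : ℝ | ENNReal.ofReal t < distribFn Ω f s} ∩ Set.Ioi 0)
      = rearrFn Ω f t := by
  classical
  set D := distribFn Ω f with hD
  have hanti : Antitone D := by
    intro s₁ s₂ h
    apply measure_mono
    intro x hx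
    exact ⟨hx.1, lt_of_le_of_lt h hx.2⟩
  set S := {y : ℝ≥0∞ | ∃ l : ℝ, 0 ≤ l ∧ y = ENNReal.ofReal l ∧ D l ≤ ENNReal.ofReal t} with hS
  have hre : rearrFn Ω f t = sInf S := rfl
  rcases Set.eq_empty_or_nonempty S with hemp | hne
  · have hE : {s : ℝ | ENNReal.ofReal t < D s} ∩ Set.Ioi 0 = Set.Ioi 0 := by
      apply Set.inter_eq_right.2
      intro s hs
      by_contra hcon
      simp only [Set.mem_setOf_eq, not_lt] at hcon
      have : (ENNReal.ofReal s) ∈ S := ⟨s, (Set.mem_Ioi.1 hs).le, rfl, hcon⟩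
      rw [hemp] at this
      exact this
    rw [hE, hre, hemp, sInf_empty, Real.volume_Ioi]
  · have hLne : sInf S ≠ ∞ := by
      obtain ⟨y, l, hl0, rfl, hDl⟩ := hne
      exact ne_top_of_le_ne_top ENNReal.ofReal_ne_top (sInf_le ⟨l, hl0, rfl, hDl⟩)
    set c : ℝ := (sInf S).toReal with hc
    have hc0 : 0 ≤ c := ENNReal.toReal_nonneg
    have hofc : ENNReal.ofReal c = sInf S := ENNReal.ofReal_toReal hLne
    have hsub1 : Set.Ioo 0 c ⊆ {s : ℝ | ENNReal.ofReal t < D s} ∩ Set.Ioi 0 := by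
      intro s hs
      refine ⟨?_, hs.1⟩
      by_contra hcon
      simp only [Set.mem_setOf_eq, not_lt] at hcon
      have hmem : (ENNReal.ofReal s) ∈ S := ⟨s, hs.1.le, rfl, hcon⟩
      have h1 : sInf S ≤ ENNReal.ofReal s := sInf_le hmem
      have h2 : ENNReal.ofReal s < ENNReal.ofReal c :=
        (ENNReal.ofReal_lt_ofReal_iff (hs.1.trans hs.2)).2 hs.2
      rw [hofc] at h2
      exact absurd (lt_of_le_of_lt h1 h2) (lt_irrefl _)
    have hsub2 : {s : ℝ | ENNReal.ofReal t < D s} ∩ Set.Ioi 0 ⊆ Set.Ioc 0 c := by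
      rintro s ⟨hsE, hs0⟩
      refine ⟨Set.mem_Ioi.1 hs0, ?_⟩
      by_contra hcon
      push_neg at hcon
      have h1 : sInf S < ENNReal.ofReal s := by
        rw [← hofc]
        exact (ENNReal.ofReal_lt_ofReal_iff (hc0.trans_lt hcon)).2 hcon
      obtain ⟨y, hyS, hy⟩ := sInf_lt_iff.1 h1
      obtain ⟨l, hl0, rfl, hDl⟩ := hyS
      have hls : l < s := by
        by_contra hls
        push_neg at hls
        exact absurd hy (not_lt.2 (ENNReal.ofReal_le_ofReal hls))
      have : D s ≤ ENNReal.ofReal t := le_trans (hanti hls.le) hDl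
      exact absurd hsE (not_lt.2 this)
    rw [hre, ← hofc]
    refine le_antisymm ?_ ?_
    · calc volume ({s : ℝ | ENNReal.ofReal t < D s} ∩ Set.Ioi 0) ≤ volume (Set.Ioc 0 c) :=
            measure_mono hsub2
      _ = ENNReal.ofReal c := by rw [Real.volume_Ioc, sub_zero]
    · calc ENNReal.ofReal c = volume (Set.Ioo 0 c) := by rw [Real.volume_Ioo, sub_zero]
      _ ≤ _ := measure_mono hsub1
end Aux6

/-- With `ψ`, `τ`, `σ = τ⁻¹` as usual, for every measurable `f : Ω → 𝕜`
one has `∫₀^∞ τ⁻¹(μ_f(s)) ds = ∫₀^∞ f*(s) (τ⁻¹)'(s) ds`, where `(τ⁻¹)'` is the (almost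
everywhere defined) derivative of the locally Lipschitz function `τ⁻¹`. -/
theorem stmt10 {k : ℕ} {𝕜 : Type*} [RCLike 𝕜]
    (Ω : Set (EuclideanSpace ℝ (Fin k))) (hΩ : IsOpen Ω)
    (ψ : ℝ → ℝ) (hY : IsYoung ψ) (hsm : StrictMonoOn ψ (Set.Ici 0)) (hΔ : Delta2 ψ)
    (h0 : Tendsto (fun t => ψ t / t) (𝓝[>] 0) (𝓝 0))
    (htop : Tendsto (fun t => t / ψ t) atTop (𝓝 0))
    (τ : ℝ → ℝ) (hτ0 : τ 0 = 0) (hτ : ∀ t : ℝ, 0 < t → τ t = 1 / ψ (1 / t))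
    (σ : ℝ → ℝ) (hσ_nonneg : ∀ t : ℝ, 0 ≤ t → 0 ≤ σ t)
    (hσ_left : ∀ t : ℝ, 0 ≤ t → σ (τ t) = t)
    (hσ_right : ∀ t : ℝ, 0 ≤ t → τ (σ t) = t)
    (f : EuclideanSpace ℝ (Fin k) → 𝕜) (hf : Measurable f) :
    ∫⁻ s in Set.Ioi (0 : ℝ), extInv σ (distribFn Ω f s) =
      ∫⁻ s in Set.Ioi (0 : ℝ), rearrFn Ω f s * ENNReal.ofReal (deriv σ s) := by
  obtain ⟨hmono, hconv, hleft, hψ0, hψ00, hψtop⟩ := hY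
  have hσ0 : σ 0 = 0 := aux_sigma0 hτ0 hσ_left
  have hσ_mono : MonotoneOn σ (Set.Ici 0) :=
    aux_sigma_mono hsm hψ0 hτ0 hτ hσ_nonneg hσ_right
  have hσ_pos : ∀ t : ℝ, 0 < t → 0 < σ t := fun t ht =>
    aux_sigma_pos hτ0 hσ_nonneg hσ_right ht
  have hlip : ∀ a b : ℝ, 0 < a → a ≤ b → ∃ K : ℝ, 0 < K ∧ ∀ u v : ℝ,
      a ≤ u → u ≤ v → v ≤ b → σ v - σ u ≤ K * (v - u) := fun a b ha hab =>
    aux_sigma_lip hsm hconv hψ0 hτ0 hτ hσ_nonneg hσ_right hσ_mono hσ_pos ha hab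
  have hsmall : ∀ ε : ℝ, 0 < ε → ∃ δ : ℝ, 0 < δ ∧ σ δ ≤ ε := fun ε hε =>
    ⟨τ ε, aux_tau_pos hsm hψ0 hτ hε, le_of_eq (hσ_left ε hε.le)⟩
  have hcont : ContinuousOn σ (Set.Ici 0) :=
    aux_sigma_cont hσ0 hσ_mono hσ_nonneg hsmall hlip
  have hac : (stF σ hσ_mono hcont).measure ≪ (volume : Measure ℝ) :=
    aux_F_ac hσ0 hσ_mono hcont hlip
  have hτ_nonneg : ∀ t : ℝ, 0 ≤ t → 0 ≤ τ t := by
    intro t ht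
    rcases eq_or_lt_of_le ht with h | h
    · rw [← h, hτ0]
    · exact (aux_tau_pos hsm hψ0 hτ h).le
  have htop' : ∫⁻ t in Set.Ioi (0:ℝ), ENNReal.ofReal (deriv σ t) = ∞ :=
    aux_int_top hσ0 hσ_mono hcont hac hτ_nonneg hσ_left
  have hanti : Antitone (distribFn Ω f) := fun s₁ s₂ h =>
    measure_mono (fun x hx => ⟨hx.1, lt_of_le_of_lt h hx.2⟩)
  have hDm : Measurable (distribFn Ω f) := hanti.measurable
  set g : ℝ → ℝ → ℝ≥0∞ := fun s t =>
    if ENNReal.ofReal t < distribFn Ω f s then ENNReal.ofReal (deriv σ t) else 0 with hg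
  have hgm : Measurable (Function.uncurry g) := by
    have huc : Function.uncurry g = fun p : ℝ × ℝ =>
        if ENNReal.ofReal p.2 < distribFn Ω f p.1 then ENNReal.ofReal (deriv σ p.2) else 0 := rfl
    rw [huc]
    exact Measurable.ite
      (measurableSet_lt (ENNReal.measurable_ofReal.comp measurable_snd)
        (hDm.comp measurable_fst))
      (ENNReal.measurable_ofReal.comp ((measurable_deriv σ).comp measurable_snd))
      measurable_const
  have claim1 : ∀ a : ℝ≥0∞,
      ∫⁻ t in Set.Ioi (0:ℝ), (if ENNReal.ofReal t < a then ENNReal.ofReal (deriv σ t) else 0)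
        = extInv σ a := by
    intro a
    have hmeas : MeasurableSet {t : ℝ | ENNReal.ofReal t < a} :=
      measurableSet_lt ENNReal.measurable_ofReal measurable_const
    have hind : (fun t => if ENNReal.ofReal t < a then ENNReal.ofReal (deriv σ t) else 0)
        = Set.indicator {t : ℝ | ENNReal.ofReal t < a}
            (fun t => ENNReal.ofReal (deriv σ t)) := by
      funext t
      rw [Set.indicator_apply]
      rfl
    have hstep : ∫⁻ t in Set.Ioi (0:ℝ),
        (if ENNReal.ofReal t < a then ENNReal.ofReal (deriv σ t) else 0)
        = ∫⁻ t in {t : ℝ | ENNReal.ofReal t < a} ∩ Set.Ioi 0, ENNReal.ofReal (deriv σ t) := by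
      rw [hind, lintegral_indicator hmeas, Measure.restrict_restrict hmeas]
    rcases eq_or_ne a ∞ with rfl | ha
    · have huniv : {t : ℝ | ENNReal.ofReal t < (∞:ℝ≥0∞)} = Set.univ := by
        ext t
        simp
      rw [hstep, huniv, Set.univ_inter, htop']
      simp [extInv]
    · have hset : {t : ℝ | ENNReal.ofReal t < a} ∩ Set.Ioi 0 = Set.Ioo 0 a.toReal := by
        ext s
        simp only [Set.mem_inter_iff, Set.mem_setOf_eq, Set.mem_Ioi, Set.mem_Ioo]
        constructor
        · rintro ⟨h1, h2⟩
          exact ⟨h2, (ENNReal.ofReal_lt_iff_lt_toReal h2.le ha).1 h1⟩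
        · rintro ⟨h1, h2⟩
          exact ⟨(ENNReal.ofReal_lt_iff_lt_toReal h1.le ha).2 h2, h1⟩
      rw [hstep, hset, aux_ftc hσ0 hσ_mono hcont hac ENNReal.toReal_nonneg]
      simp [extInv, ha]
  have claim2 : ∀ t : ℝ, ∫⁻ s in Set.Ioi (0:ℝ), g s t
      = rearrFn Ω f t * ENNReal.ofReal (deriv σ t) := by
    intro t
    have hmeas : MeasurableSet {s : ℝ | ENNReal.ofReal t < distribFn Ω f s} :=
      measurableSet_lt measurable_const hDm
    have hind : (fun s => g s t)
        = Set.indicator {s : ℝ | ENNReal.ofReal t < distribFn Ω f s}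
            (fun _ => ENNReal.ofReal (deriv σ t)) := by
      funext s
      rw [Set.indicator_apply]
      rfl
    calc ∫⁻ s in Set.Ioi (0:ℝ), g s t
        = ∫⁻ s in {s : ℝ | ENNReal.ofReal t < distribFn Ω f s} ∩ Set.Ioi 0,
            ENNReal.ofReal (deriv σ t) := by
          rw [hind, lintegral_indicator hmeas, Measure.restrict_restrict hmeas]
    _ = ENNReal.ofReal (deriv σ t)
          * volume ({s : ℝ | ENNReal.ofReal t < distribFn Ω f s} ∩ Set.Ioi 0) :=
          setLIntegral_const _ _
    _ = rearrFn Ω f t * ENNReal.ofReal (deriv σ t) := by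
          rw [aux_rearr Ω f t, mul_comm]
  calc ∫⁻ s in Set.Ioi (0 : ℝ), extInv σ (distribFn Ω f s)
      = ∫⁻ s in Set.Ioi (0:ℝ), ∫⁻ t in Set.Ioi (0:ℝ), g s t := by
        refine lintegral_congr fun s => ?_
        exact (claim1 (distribFn Ω f s)).symm
  _ = ∫⁻ t in Set.Ioi (0:ℝ), ∫⁻ s in Set.Ioi (0:ℝ), g s t :=
        lintegral_lintegral_swap hgm.aemeasurable
  _ = _ := lintegral_congr fun t => claim2 t
end

section
/- Let φ : (0,∞) → ℝ be right continuous, nonnegative and nonincreasing. Then the operator f ↦ ∫₀^∞ φ(t) f*(t) dt, acting on measurable functions f : Ω → K, is subadditive: for all measurable f, g one has ∫₀^∞ φ(t) (f+g)*(t) dt ≤ ∫₀^∞ φ(t) f*(t) dt + ∫₀^∞ φ(t) g*(t) dt. -/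
open MeasureTheory Filter Topology Set
open scoped ENNReal

private lemma vol_set_ofReal_lt (c : ℝ≥0∞) :
    volume {s : ℝ | 0 < s ∧ ENNReal.ofReal s < c} = c := by
  rcases eq_or_ne c ⊤ with rfl | hc
  · have h : {s : ℝ | 0 < s ∧ ENNReal.ofReal s < ⊤} = Ioi 0 := by
      ext s; simp [ENNReal.ofReal_lt_top]
    rw [h, Real.volume_Ioi]
  · have h : {s : ℝ | 0 < s ∧ ENNReal.ofReal s < c} = Ioo 0 c.toReal := by
      ext s
      simp only [mem_Ioo, mem_setOf_eq, and_congr_right_iff]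
      intro hs
      exact ENNReal.ofReal_lt_iff_lt_toReal hs.le hc
    rw [h, Real.volume_Ioo, sub_zero, ENNReal.ofReal_toReal hc]

private lemma lintegral_ennreal_layercake (μ : Measure ℝ) [SigmaFinite μ]
    {R : ℝ → ℝ≥0∞} (hR : Measurable R) :
    ∫⁻ t, R t ∂μ = ∫⁻ s in Ioi (0:ℝ), μ {t | ENNReal.ofReal s < R t} := by
  have key : ∀ t, R t
      = ∫⁻ s in Ioi (0:ℝ), {s : ℝ | ENNReal.ofReal s < R t}.indicator (fun _ => 1) s := by
    intro t
    rw [lintegral_indicator (by exact measurableSet_lt ENNReal.measurable_ofReal measurable_const),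
      Measure.restrict_restrict (by exact measurableSet_lt ENNReal.measurable_ofReal measurable_const),
      setLIntegral_one]
    rw [show {s : ℝ | ENNReal.ofReal s < R t} ∩ Ioi 0 = {s : ℝ | 0 < s ∧ ENNReal.ofReal s < R t} by
      ext s; simp [mem_inter_iff, and_comm]]
    exact (vol_set_ofReal_lt (R t)).symm
  calc ∫⁻ t, R t ∂μ
      = ∫⁻ t, (∫⁻ s in Ioi (0:ℝ), {s : ℝ | ENNReal.ofReal s < R t}.indicator (fun _ => 1) s) ∂μ := by
        exact lintegral_congr key
    _ = ∫⁻ s in Ioi (0:ℝ), ∫⁻ t, {s : ℝ | ENNReal.ofReal s < R t}.indicator (fun _ => (1:ℝ≥0∞)) s ∂μ := by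
        apply lintegral_lintegral_swap (f := fun (t s : ℝ) =>
          {s : ℝ | ENNReal.ofReal s < R t}.indicator (fun _ => (1:ℝ≥0∞)) s)
        have : (Function.uncurry fun (t s : ℝ) =>
            {s : ℝ | ENNReal.ofReal s < R t}.indicator (fun _ => (1:ℝ≥0∞)) s)
            = fun p : ℝ × ℝ => {q : ℝ × ℝ | ENNReal.ofReal q.2 < R q.1}.indicator (fun _ => 1) p := by
          funext p
          simp only [Function.uncurry, Set.indicator, mem_setOf_eq]
        rw [this]
        exact (Measurable.indicator measurable_const
          (measurableSet_lt (ENNReal.measurable_ofReal.comp measurable_snd)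
            (hR.comp measurable_fst))).aemeasurable
    _ = ∫⁻ s in Ioi (0:ℝ), μ {t | ENNReal.ofReal s < R t} := by
        apply lintegral_congr
        intro s
        have : ∀ t, {s : ℝ | ENNReal.ofReal s < R t}.indicator (fun _ => (1:ℝ≥0∞)) s
            = {t : ℝ | ENNReal.ofReal s < R t}.indicator (fun _ => (1:ℝ≥0∞)) t := by
          intro t; simp only [Set.indicator, mem_setOf_eq]
        rw [lintegral_congr this, lintegral_indicator_const
          (by exact measurableSet_lt measurable_const hR), one_mul]

private lemma lintegral_Ioi_shift {c : ℝ} (k : ℝ → ℝ≥0∞) :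
    ∫⁻ s in Ioi c, k s = ∫⁻ u in Ioi (0:ℝ), k (u + c) := by
  have h1 : ∫⁻ s in Ioi c, k s = ∫⁻ s, (Ioi c).indicator k s := by
    rw [lintegral_indicator measurableSet_Ioi]
  have h2 : ∫⁻ u in Ioi (0:ℝ), k (u + c) = ∫⁻ u, (Ioi (0:ℝ)).indicator (fun u => k (u + c)) u := by
    rw [lintegral_indicator measurableSet_Ioi]
  rw [h1, h2, ← lintegral_add_right_eq_self (fun s => (Ioi c).indicator k s) c]
  apply lintegral_congr
  intro u
  by_cases hu : 0 < u
  · rw [Set.indicator_of_mem (by simpa using hu), Set.indicator_of_mem (by simp [hu])]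
  · rw [Set.indicator_of_notMem (by simpa using hu),
      Set.indicator_of_notMem (by simp; linarith [le_of_not_gt hu])]

private lemma lintegral_Ioi_eq_iSup {d : ℝ → ℝ≥0∞} (hd : Measurable d) :
    ∫⁻ s in Ioi (0:ℝ), d s = ⨆ n : ℕ, ∫⁻ s in Ioi (((n:ℝ)+1)⁻¹), d s := by
  have hpos : ∀ n : ℕ, (0:ℝ) < ((n:ℝ)+1)⁻¹ := fun n => by positivity
  have hmeas : ∀ n : ℕ, Measurable ((Ioi (((n:ℝ)+1)⁻¹)).indicator d) :=
    fun n => hd.indicator measurableSet_Ioi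
  have hmono : Monotone fun n : ℕ => (Ioi (((n:ℝ)+1)⁻¹)).indicator d := by
    intro n m hnm
    apply Set.indicator_le_indicator_of_subset _ (fun s => zero_le)
    apply Ioi_subset_Ioi
    have h : (n:ℝ) + 1 ≤ (m:ℝ) + 1 := by
      have : (n:ℝ) ≤ m := Nat.cast_le.2 hnm
      linarith
    exact inv_anti₀ (by positivity) h
  have hsup : ∀ s, (⨆ n : ℕ, (Ioi (((n:ℝ)+1)⁻¹)).indicator d s) = (Ioi (0:ℝ)).indicator d s := by
    intro s
    by_cases hs : 0 < s
    · rw [Set.indicator_of_mem (by simpa using hs)]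
      apply le_antisymm
      · exact iSup_le fun n => Set.indicator_le_self _ _ s
      · obtain ⟨n, hn⟩ := exists_nat_one_div_lt hs
        rw [show (1:ℝ)/((n:ℝ)+1) = ((n:ℝ)+1)⁻¹ by ring] at hn
        refine le_trans (le_of_eq ?_) (le_iSup _ n)
        rw [Set.indicator_of_mem (by simpa using hn)]
    · rw [Set.indicator_of_notMem (by simpa using hs)]
      simp only [ENNReal.iSup_eq_zero]
      intro n
      apply Set.indicator_of_notMem
      simp only [mem_Ioi, not_lt]
      calc s ≤ 0 := le_of_not_gt hs
        _ ≤ _ := (hpos n).le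
  calc ∫⁻ s in Ioi (0:ℝ), d s = ∫⁻ s, (Ioi (0:ℝ)).indicator d s := by
        rw [lintegral_indicator measurableSet_Ioi]
    _ = ∫⁻ s, ⨆ n : ℕ, (Ioi (((n:ℝ)+1)⁻¹)).indicator d s := by
        apply lintegral_congr; intro s; rw [hsup]
    _ = ⨆ n : ℕ, ∫⁻ s, (Ioi (((n:ℝ)+1)⁻¹)).indicator d s := lintegral_iSup hmeas hmono
    _ = ⨆ n : ℕ, ∫⁻ s in Ioi (((n:ℝ)+1)⁻¹), d s := by
        apply iSup_congr; intro n; rw [lintegral_indicator measurableSet_Ioi]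

section Rearr

variable {k : ℕ} {𝕜 : Type*} [RCLike 𝕜] (Ω : Set (EuclideanSpace ℝ (Fin k)))
  (f : EuclideanSpace ℝ (Fin k) → 𝕜)

private lemma distrib_eq (hΩ : MeasurableSet Ω) (hf : Measurable f) (l : ℝ) :
    distribFn Ω f l = (volume.restrict Ω) {x | l < ‖f x‖} := by
  rw [Measure.restrict_apply (by exact measurableSet_lt measurable_const hf.norm)]
  rw [distribFn]
  congr 1
  ext x; simp [and_comm]

private lemma distrib_anti : Antitone (distribFn Ω f) := by
  intro l₁ l₂ h
  apply measure_mono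
  intro x hx
  exact ⟨hx.1, lt_of_le_of_lt h hx.2⟩

private lemma rearr_anti : Antitone (rearrFn Ω f) := by
  intro t₁ t₂ h
  apply sInf_le_sInf
  rintro y ⟨l, hl, rfl, hd⟩
  exact ⟨l, hl, rfl, hd.trans (ENNReal.ofReal_le_ofReal h)⟩

private lemma rearr_measurable : Measurable (rearrFn Ω f) :=
  (rearr_anti Ω f).measurable

private lemma rearr_le {l t : ℝ} (hl : 0 ≤ l) (h : distribFn Ω f l ≤ ENNReal.ofReal t) :
    rearrFn Ω f t ≤ ENNReal.ofReal l :=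
  sInf_le ⟨l, hl, rfl, h⟩

private lemma lt_distrib_of_lt_rearr {s t : ℝ} (hs : 0 ≤ s)
    (h : ENNReal.ofReal s < rearrFn Ω f t) : ENNReal.ofReal t < distribFn Ω f s := by
  by_contra hc
  exact absurd (rearr_le Ω f hs (le_of_not_gt hc)) (not_le.2 h)

private lemma rearr_lower {s t ε : ℝ} (hs : 0 ≤ s) (hε : 0 < ε)
    (h : ENNReal.ofReal t < distribFn Ω f (s + ε)) :
    ENNReal.ofReal s < rearrFn Ω f t := by
  have h1 : ENNReal.ofReal (s + ε) ≤ rearrFn Ω f t := by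
    apply le_sInf
    rintro y ⟨l, hl, rfl, hd⟩
    apply ENNReal.ofReal_le_ofReal
    by_contra hc
    push_neg at hc
    exact absurd (le_trans ((distrib_anti Ω f) hc.le) hd) (not_le.2 h)
  calc ENNReal.ofReal s < ENNReal.ofReal (s + ε) :=
        (ENNReal.ofReal_lt_ofReal_iff (by linarith)).2 (by linarith)
    _ ≤ _ := h1

/-- The set `(0, a)` for `a : ℝ≥0∞`. -/
private def So (a : ℝ≥0∞) : Set ℝ := {t : ℝ | 0 < t ∧ ENNReal.ofReal t < a}

private lemma So_meas (a : ℝ≥0∞) : MeasurableSet (So a) := by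
  apply MeasurableSet.inter (measurableSet_Ioi (a := (0:ℝ)))
  exact ENNReal.measurable_ofReal (measurableSet_Iio (a := a))

private lemma So_top : So ⊤ = Ioi (0:ℝ) := by
  ext t; simp [So, ENNReal.ofReal_lt_top]

private lemma So_ofReal (u : ℝ) : So (ENNReal.ofReal u) = Ioi (0:ℝ) ∩ Iio u := by
  ext t
  simp only [So, mem_setOf_eq, mem_inter_iff, mem_Ioi, mem_Iio, and_congr_right_iff]
  intro ht
  rw [ENNReal.ofReal_lt_ofReal_iff_of_nonneg ht.le]

/-- Identity (E): `∫_{(0,a)} f* = ∫₀^∞ min (μ_f s) a ds`. -/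
private lemma lintegral_rearr_eq (hΩ : MeasurableSet Ω) (hf : Measurable f) (a : ℝ≥0∞) :
    ∫⁻ t in So a, rearrFn Ω f t = ∫⁻ s in Ioi (0:ℝ), min (distribFn Ω f s) a := by
  have hdm : Measurable fun s => min (distribFn Ω f s) a :=
    (distrib_anti Ω f).measurable.min measurable_const
  rw [lintegral_ennreal_layercake _ (rearr_measurable Ω f)]
  apply le_antisymm
  · apply lintegral_mono_ae
    rw [ae_restrict_iff' measurableSet_Ioi]
    apply ae_of_all
    intro s hs
    rw [Measure.restrict_apply (by exact measurableSet_lt measurable_const (rearr_measurable Ω f))]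
    calc volume ({t | ENNReal.ofReal s < rearrFn Ω f t} ∩ So a)
        ≤ volume {t | 0 < t ∧ ENNReal.ofReal t < min (distribFn Ω f s) a} := by
          apply measure_mono
          rintro t ⟨ht1, ht2, ht3⟩
          exact ⟨ht2, lt_min (lt_distrib_of_lt_rearr Ω f (le_of_lt hs) ht1) ht3⟩
      _ = min (distribFn Ω f s) a := vol_set_ofReal_lt _
  · -- lower bound via shift by ε = 1/(n+1)
    rw [lintegral_Ioi_eq_iSup hdm]
    apply iSup_le
    intro n
    set ε : ℝ := ((n:ℝ)+1)⁻¹ with hε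
    have hεpos : 0 < ε := by positivity
    rw [lintegral_Ioi_shift]
    apply lintegral_mono_ae
    rw [ae_restrict_iff' measurableSet_Ioi]
    apply ae_of_all
    intro s hs
    rw [Measure.restrict_apply (by exact measurableSet_lt measurable_const (rearr_measurable Ω f))]
    calc min (distribFn Ω f (s + ε)) a
        = volume {t | 0 < t ∧ ENNReal.ofReal t < min (distribFn Ω f (s + ε)) a} :=
          (vol_set_ofReal_lt _).symm
      _ ≤ volume ({t | ENNReal.ofReal s < rearrFn Ω f t} ∩ So a) := by
          apply measure_mono
          rintro t ⟨ht1, ht2⟩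
          rw [lt_min_iff] at ht2
          exact ⟨rearr_lower Ω f (le_of_lt hs) hεpos ht2.1, ht1, ht2.2⟩

end Rearr

section Core

variable {k : ℕ} {𝕜 : Type*} [RCLike 𝕜] {Ω : Set (EuclideanSpace ℝ (Fin k))}
  {f g : EuclideanSpace ℝ (Fin k) → 𝕜}

private lemma ofReal_max0 (y : ℝ) : ENNReal.ofReal (max y 0) = ENNReal.ofReal y := by
  rcases le_total y 0 with h | h
  · rw [max_eq_right h, ENNReal.ofReal_of_nonpos h, ENNReal.ofReal_zero]
  · rw [max_eq_left h]

private lemma claimA (hΩ : MeasurableSet Ω) (hf : Measurable f) {a : ℝ≥0∞}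
    (hT : {l : ℝ | 0 ≤ l ∧ distribFn Ω f l ≤ a}.Nonempty) :
    ∫⁻ s in Ioi (0:ℝ), min (distribFn Ω f s) a
      = a * ENNReal.ofReal (sInf {l : ℝ | 0 ≤ l ∧ distribFn Ω f l ≤ a})
        + ∫⁻ x in Ω, ENNReal.ofReal (‖f x‖ - sInf {l : ℝ | 0 ≤ l ∧ distribFn Ω f l ≤ a}) := by
  set T := {l : ℝ | 0 ≤ l ∧ distribFn Ω f l ≤ a} with hT_def
  set c := sInf T with hc_def
  have hbdd : BddBelow T := ⟨0, fun l hl => hl.1⟩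
  have hc0 : 0 ≤ c := le_csInf hT fun l hl => hl.1
  have hup : ∀ s, c < s → distribFn Ω f s ≤ a := by
    intro s hs
    obtain ⟨l, hlT, hls⟩ := exists_lt_of_csInf_lt hT hs
    exact le_trans (distrib_anti Ω f hls.le) hlT.2
  have hdown : ∀ s, 0 ≤ s → s < c → a < distribFn Ω f s := by
    intro s hs hsc
    by_contra hcon
    exact absurd (csInf_le hbdd ⟨hs, le_of_not_gt hcon⟩) (not_le.2 hsc)
  have hsplit : (Ioi (0:ℝ)) = Ioc 0 c ∪ Ioi c := (Ioc_union_Ioi_eq_Ioi hc0).symm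
  rw [hsplit, lintegral_union measurableSet_Ioi (Set.Ioc_disjoint_Ioi le_rfl)]
  congr 1
  · -- piece 1
    rw [← setLIntegral_congr Ioo_ae_eq_Ioc]
    rw [setLIntegral_congr_fun measurableSet_Ioo
      (fun s (hs : s ∈ Ioo 0 c) => min_eq_right (hdown s hs.1.le hs.2).le)]
    rw [setLIntegral_const, Real.volume_Ioo, sub_zero, mul_comm]
  · -- piece 2
    rw [setLIntegral_congr_fun measurableSet_Ioi
      (fun s (hs : s ∈ Ioi c) => min_eq_left (hup s hs))]
    rw [lintegral_Ioi_shift]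
    have h1 : ∀ u : ℝ, u ∈ Ioi (0:ℝ) →
        distribFn Ω f (u + c) = (volume.restrict Ω) {x | u < max (‖f x‖ - c) 0} := by
      intro u hu
      rw [distrib_eq Ω f hΩ hf]
      congr 1
      ext x
      simp only [mem_setOf_eq, lt_max_iff]
      constructor
      · intro h; left; linarith
      · rintro (h | h)
        · linarith
        · exact absurd h (not_lt.2 (le_of_lt hu))
    rw [setLIntegral_congr_fun measurableSet_Ioi (fun u hu => h1 u hu)]
    have h2 := lintegral_eq_lintegral_meas_lt (volume.restrict Ω)
      (ae_of_all _ (fun x => le_max_right (‖f x‖ - c) 0))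
      (((hf.norm.sub measurable_const).max measurable_const).aemeasurable)
    rw [← h2]
    apply lintegral_congr
    intro x
    exact ofReal_max0 _

private lemma core (hΩ : MeasurableSet Ω) (hf : Measurable f) (hg : Measurable g) (a : ℝ≥0∞) :
    ∫⁻ t in So a, rearrFn Ω (fun x => f x + g x) t ≤
      (∫⁻ t in So a, rearrFn Ω f t) + ∫⁻ t in So a, rearrFn Ω g t := by
  have hfg : Measurable fun x => f x + g x := hf.add hg
  rw [lintegral_rearr_eq Ω _ hΩ hfg a, lintegral_rearr_eq Ω f hΩ hf a,
    lintegral_rearr_eq Ω g hΩ hg a]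
  rcases eq_or_ne a 0 with rfl | ha0
  · simp
  by_cases hT₁ : {l : ℝ | 0 ≤ l ∧ distribFn Ω f l ≤ a}.Nonempty
  swap
  · -- RHS is infinite
    have h1 : ∫⁻ s in Ioi (0:ℝ), min (distribFn Ω f s) a = ⊤ := by
      have : ∀ s : ℝ, s ∈ Ioi (0:ℝ) → min (distribFn Ω f s) a = a := by
        intro s hs
        rw [Set.not_nonempty_iff_eq_empty, Set.eq_empty_iff_forall_notMem] at hT₁
        have := hT₁ s
        simp only [mem_setOf_eq, not_and, not_le] at this
        exact min_eq_right (this (le_of_lt hs)).le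
      rw [setLIntegral_congr_fun measurableSet_Ioi (fun s hs => this s hs), setLIntegral_const,
        Real.volume_Ioi, ENNReal.mul_top ha0]
    rw [h1]
    simp
  by_cases hT₂ : {l : ℝ | 0 ≤ l ∧ distribFn Ω g l ≤ a}.Nonempty
  swap
  · have h1 : ∫⁻ s in Ioi (0:ℝ), min (distribFn Ω g s) a = ⊤ := by
      have : ∀ s : ℝ, s ∈ Ioi (0:ℝ) → min (distribFn Ω g s) a = a := by
        intro s hs
        rw [Set.not_nonempty_iff_eq_empty, Set.eq_empty_iff_forall_notMem] at hT₂
        have := hT₂ s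
        simp only [mem_setOf_eq, not_and, not_le] at this
        exact min_eq_right (this (le_of_lt hs)).le
      rw [setLIntegral_congr_fun measurableSet_Ioi (fun s hs => this s hs), setLIntegral_const,
        Real.volume_Ioi, ENNReal.mul_top ha0]
    rw [h1]
    simp
  -- main case
  set c₁ := sInf {l : ℝ | 0 ≤ l ∧ distribFn Ω f l ≤ a} with hc₁
  set c₂ := sInf {l : ℝ | 0 ≤ l ∧ distribFn Ω g l ≤ a} with hc₂
  have hc₁0 : 0 ≤ c₁ := le_csInf hT₁ fun l hl => hl.1
  have hc₂0 : 0 ≤ c₂ := le_csInf hT₂ fun l hl => hl.1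
  set c := c₁ + c₂ with hc
  have hc0 : 0 ≤ c := by positivity
  set Q : EuclideanSpace ℝ (Fin k) → ℝ := fun x => max (‖f x‖ - c₁) 0 + max (‖g x‖ - c₂) 0
    with hQ
  have hQm : Measurable Q :=
    ((hf.norm.sub measurable_const).max measurable_const).add
      ((hg.norm.sub measurable_const).max measurable_const)
  have hQnn : ∀ x, 0 ≤ Q x := fun x => by positivity
  have claimB : ∫⁻ s in Ioi (0:ℝ), min (distribFn Ω (fun x => f x + g x) s) a
      ≤ a * ENNReal.ofReal c + ∫⁻ x in Ω, ENNReal.ofReal (Q x) := by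
    have hsplit : (Ioi (0:ℝ)) = Ioc 0 c ∪ Ioi c := (Ioc_union_Ioi_eq_Ioi hc0).symm
    rw [hsplit, lintegral_union measurableSet_Ioi (Set.Ioc_disjoint_Ioi le_rfl)]
    apply add_le_add
    · calc ∫⁻ s in Ioc (0:ℝ) c, min (distribFn Ω (fun x => f x + g x) s) a
          ≤ ∫⁻ _ in Ioc (0:ℝ) c, a := lintegral_mono fun s => min_le_right _ _
        _ = a * ENNReal.ofReal c := by
            rw [setLIntegral_const, Real.volume_Ioc, sub_zero, mul_comm]
    · calc ∫⁻ s in Ioi c, min (distribFn Ω (fun x => f x + g x) s) a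
          ≤ ∫⁻ s in Ioi c, (volume.restrict Ω) {x | s - c < Q x} := by
            apply lintegral_mono_ae
            rw [ae_restrict_iff' measurableSet_Ioi]
            apply ae_of_all
            intro s _
            refine le_trans (min_le_left _ _) ?_
            rw [distrib_eq Ω _ hΩ hfg]
            apply measure_mono
            intro x hx
            simp only [mem_setOf_eq] at hx ⊢
            have hn := norm_add_le (f x) (g x)
            have h1 : ‖f x‖ - c₁ ≤ max (‖f x‖ - c₁) 0 := le_max_left _ _
            have h2 : ‖g x‖ - c₂ ≤ max (‖g x‖ - c₂) 0 := le_max_left _ _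
            simp only [hQ, hc]
            linarith
        _ = ∫⁻ u in Ioi (0:ℝ), (volume.restrict Ω) {x | u < Q x} := by
            rw [lintegral_Ioi_shift (fun s => (volume.restrict Ω) {x | s - c < Q x})]
            apply lintegral_congr
            intro u
            congr 1
            ext x
            simp only [mem_setOf_eq, add_sub_cancel_right]
        _ = ∫⁻ x in Ω, ENNReal.ofReal (Q x) :=
            (lintegral_eq_lintegral_meas_lt (volume.restrict Ω) (ae_of_all _ hQnn)
              hQm.aemeasurable).symm
  rw [claimA hΩ hf hT₁, claimA hΩ hg hT₂]
  refine le_trans claimB ?_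
  have hQsplit : ∫⁻ x in Ω, ENNReal.ofReal (Q x)
      = (∫⁻ x in Ω, ENNReal.ofReal (‖f x‖ - c₁)) + ∫⁻ x in Ω, ENNReal.ofReal (‖g x‖ - c₂) := by
    have e1 : ∀ x, ENNReal.ofReal (Q x)
        = ENNReal.ofReal (max (‖f x‖ - c₁) 0) + ENNReal.ofReal (max (‖g x‖ - c₂) 0) := by
      intro x
      rw [hQ, ENNReal.ofReal_add (le_max_right _ _) (le_max_right _ _)]
    rw [lintegral_congr e1, lintegral_add_left
      (by exact ((hf.norm.sub measurable_const).max measurable_const).ennreal_ofReal)]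
    congr 1
    · exact lintegral_congr fun x => ofReal_max0 _
    · exact lintegral_congr fun x => ofReal_max0 _
  rw [hQsplit]
  rw [hc, ENNReal.ofReal_add hc₁0 hc₂0, mul_add]
  calc a * ENNReal.ofReal c₁ + a * ENNReal.ofReal c₂
      + ((∫⁻ x in Ω, ENNReal.ofReal (‖f x‖ - c₁)) + ∫⁻ x in Ω, ENNReal.ofReal (‖g x‖ - c₂))
      = (a * ENNReal.ofReal c₁ + ∫⁻ x in Ω, ENNReal.ofReal (‖f x‖ - c₁))
        + (a * ENNReal.ofReal c₂ + ∫⁻ x in Ω, ENNReal.ofReal (‖g x‖ - c₂)) := by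
        abel
    _ ≤ _ := le_refl _

end Core

section Psi

private noncomputable def psi (φ : ℝ → ℝ) (n : ℕ) (t : ℝ) : ℝ :=
  min (φ (max t (((n:ℝ)+1)⁻¹))) (n:ℝ)

variable {φ : ℝ → ℝ}

private lemma maxc_pos {t : ℝ} {c : ℝ} (hc : 0 < c) : (0:ℝ) < max t c :=
  lt_of_lt_of_le hc (le_max_right _ _)

private lemma psi_anti (hφ_anti : AntitoneOn φ (Ioi 0)) (n : ℕ) : Antitone (psi φ n) := by
  intro t₁ t₂ h
  have hc : (0:ℝ) < ((n:ℝ)+1)⁻¹ := by positivity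
  exact min_le_min
    (hφ_anti (mem_Ioi.2 (maxc_pos hc)) (mem_Ioi.2 (maxc_pos hc)) (max_le_max h le_rfl)) le_rfl

private lemma psi_nonneg (hφ_nonneg : ∀ t : ℝ, 0 < t → 0 ≤ φ t) (n : ℕ) (t : ℝ) :
    0 ≤ psi φ n t :=
  le_min (hφ_nonneg _ (maxc_pos (by positivity))) (Nat.cast_nonneg n)

private lemma psi_rc (hφ_rc : ∀ t : ℝ, 0 < t → ContinuousWithinAt φ (Set.Ici t) t) (n : ℕ)
    (x : ℝ) : ContinuousWithinAt (psi φ n) (Ici x) x := by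
  set c : ℝ := ((n:ℝ)+1)⁻¹ with hcdef
  have hc : 0 < c := by positivity
  rcases lt_or_ge x c with hx | hx
  · have hev : psi φ n =ᶠ[𝓝[Ici x] x] (fun _ => psi φ n x) := by
      have hmem : Iio c ∈ 𝓝[Ici x] x := nhdsWithin_le_nhds (Iio_mem_nhds hx)
      filter_upwards [hmem] with s hs
      show psi φ n s = psi φ n x
      rw [psi, psi, max_eq_right (le_of_lt hs), max_eq_right hx.le]
    exact (continuousWithinAt_const (b := psi φ n x)).congr_of_eventuallyEq hev rfl
  · have hx0 : 0 < x := lt_of_lt_of_le hc hx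
    have hmax : max x c = x := max_eq_left hx
    have hcont : ContinuousWithinAt (fun s => φ (max s c)) (Ici x) x := by
      have hcmp : ContinuousWithinAt (φ ∘ fun s => max s c) (Ici x) x := by
        apply ContinuousWithinAt.comp (t := Ici x)
        · rw [hmax]; exact hφ_rc x hx0
        · exact (continuous_id.max continuous_const).continuousWithinAt
        · intro s hs
          exact le_trans (mem_Ici.1 hs) (le_max_left _ _)
      exact hcmp
    exact hcont.min continuousWithinAt_const

private lemma psi_mono_n (hφ_anti : AntitoneOn φ (Ioi 0)) (t : ℝ) :
    Monotone fun n : ℕ => psi φ n t := by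
  apply monotone_nat_of_le_succ
  intro n
  have hc1 : (0:ℝ) < ((n:ℝ)+1)⁻¹ := by positivity
  have hc2 : (0:ℝ) < (((n+1:ℕ):ℝ)+1)⁻¹ := by positivity
  have hle : (((n+1:ℕ):ℝ)+1)⁻¹ ≤ ((n:ℝ)+1)⁻¹ := by
    apply inv_anti₀ (by positivity)
    push_cast
    linarith
  have hφle : φ (max t (((n:ℝ)+1)⁻¹)) ≤ φ (max t ((((n+1:ℕ):ℝ)+1)⁻¹)) :=
    hφ_anti (mem_Ioi.2 (maxc_pos hc2)) (mem_Ioi.2 (maxc_pos hc1)) (max_le_max le_rfl hle)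
  exact min_le_min hφle (by push_cast; linarith)

private lemma psi_le (hφ_anti : AntitoneOn φ (Ioi 0)) (n : ℕ) {t : ℝ} (ht : 0 < t) :
    psi φ n t ≤ φ t :=
  le_trans (min_le_left _ _)
    (hφ_anti (mem_Ioi.2 ht) (mem_Ioi.2 (maxc_pos (by positivity))) (le_max_left _ _))

private lemma psi_sup (hφ_anti : AntitoneOn φ (Ioi 0)) {t : ℝ} (ht : 0 < t) :
    ⨆ n : ℕ, ENNReal.ofReal (psi φ n t) = ENNReal.ofReal (φ t) := by
  apply le_antisymm
  · exact iSup_le fun n => ENNReal.ofReal_le_ofReal (psi_le hφ_anti n ht)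
  · obtain ⟨n₁, hn₁⟩ := exists_nat_ge (φ t)
    obtain ⟨n₂, hn₂⟩ := exists_nat_one_div_lt ht
    set n := max n₁ n₂ with hn
    have hcn : ((n:ℝ)+1)⁻¹ ≤ t := by
      have hcast : (n₂:ℝ) ≤ (n:ℝ) := Nat.cast_le.2 (le_max_right n₁ n₂)
      have h1 : ((n:ℝ)+1)⁻¹ ≤ ((n₂:ℝ)+1)⁻¹ := inv_anti₀ (by positivity) (by linarith)
      rw [one_div] at hn₂
      linarith
    have heq : psi φ n t = φ t := by
      rw [psi, max_eq_left hcn,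
        min_eq_left (le_trans hn₁ (Nat.cast_le.2 (le_max_left n₁ n₂)))]
    calc ENNReal.ofReal (φ t) = ENNReal.ofReal (psi φ n t) := by rw [heq]
      _ ≤ ⨆ m : ℕ, ENNReal.ofReal (psi φ m t) := le_iSup (fun m => ENNReal.ofReal (psi φ m t)) n

end Psi

section Step

private noncomputable def negStj (ψ : ℝ → ℝ) (hanti : Antitone ψ)
    (hrc : ∀ x, ContinuousWithinAt ψ (Ici x) x) : StieltjesFunction ℝ where
  toFun := fun t => -ψ t
  mono' := fun _ _ h => neg_le_neg (hanti h)
  right_continuous' := fun x => (hrc x).neg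

private lemma step {ψ : ℝ → ℝ} (hanti : Antitone ψ)
    (hrc : ∀ x, ContinuousWithinAt ψ (Ici x) x) (hnn : ∀ t, 0 ≤ ψ t)
    {R : ℝ → ℝ≥0∞} (hR : Measurable R) :
    ∫⁻ t in Ioi (0:ℝ), ENNReal.ofReal (ψ t) * R t
      = ENNReal.ofReal (⨅ t, ψ t) * (∫⁻ t in Ioi (0:ℝ), R t)
        + ∫⁻ u, (∫⁻ t in Ioi (0:ℝ) ∩ Iio u, R t) ∂(negStj ψ hanti hrc).measure := by
  set ρ := (negStj ψ hanti hrc).measure with hρ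
  set L := ⨅ t, ψ t with hL
  have hbdd : BddBelow (range ψ) := ⟨0, by rintro y ⟨t, rfl⟩; exact hnn t⟩
  have hL0 : 0 ≤ L := le_ciInf fun t => hnn t
  have hLle : ∀ t, L ≤ ψ t := fun t => ciInf_le hbdd t
  have htendψ : Tendsto ψ atTop (𝓝 L) := tendsto_atTop_ciInf hanti hbdd
  have hIoi : ∀ t, ρ (Ioi t) = ENNReal.ofReal (ψ t - L) := by
    intro t
    have h1 : Tendsto (fun x : ℕ => ρ (Ioc t (x:ℝ))) atTop (𝓝 (ρ (Ioi t))) := by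
      rw [show Ioi t = ⋃ x : ℕ, Ioc t (x : ℝ) from ?_]
      · have hm : Monotone fun x : ℕ => Ioc t (x:ℝ) :=
          fun a b hab => Ioc_subset_Ioc_right (Nat.cast_le.2 hab)
        exact tendsto_measure_iUnion_atTop (μ := ρ) hm
      · ext y
        simp only [mem_Ioi, mem_iUnion, mem_Ioc]
        constructor
        · intro hy
          obtain ⟨m, hm⟩ := exists_nat_ge y
          exact ⟨m, hy, hm⟩
        · rintro ⟨m, hy, _⟩; exact hy
    have h2 : Tendsto (fun x : ℕ => ρ (Ioc t (x:ℝ))) atTop (𝓝 (ENNReal.ofReal (ψ t - L))) := by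
      have hval : ∀ x : ℕ, ρ (Ioc t (x:ℝ)) = ENNReal.ofReal (ψ t - ψ (x:ℝ)) := by
        intro x
        rw [hρ, StieltjesFunction.measure_Ioc]
        congr 1
        show -ψ (x:ℝ) - -ψ t = ψ t - ψ (x:ℝ)
        ring
      simp_rw [hval]
      apply ENNReal.tendsto_ofReal
      exact (tendsto_const_nhds.sub (htendψ.comp tendsto_natCast_atTop_atTop))
    exact tendsto_nhds_unique h1 h2
  have hkey : ∀ t, ENNReal.ofReal (ψ t) = ENNReal.ofReal L + ρ (Ioi t) := by
    intro t
    rw [hIoi t, ← ENNReal.ofReal_add hL0 (sub_nonneg.2 (hLle t))]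
    congr 1
    ring
  calc ∫⁻ t in Ioi (0:ℝ), ENNReal.ofReal (ψ t) * R t
      = ∫⁻ t in Ioi (0:ℝ), (ENNReal.ofReal L * R t + ρ (Ioi t) * R t) := by
        apply lintegral_congr
        intro t
        rw [hkey t, add_mul]
    _ = ENNReal.ofReal L * (∫⁻ t in Ioi (0:ℝ), R t)
        + ∫⁻ t in Ioi (0:ℝ), ρ (Ioi t) * R t := by
        rw [lintegral_add_left (f := fun t => ENNReal.ofReal L * R t) (measurable_const.mul hR), lintegral_const_mul _ hR]
    _ = ENNReal.ofReal L * (∫⁻ t in Ioi (0:ℝ), R t)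
        + ∫⁻ u, (∫⁻ t in Ioi (0:ℝ) ∩ Iio u, R t) ∂ρ := by
        congr 1
        calc ∫⁻ t in Ioi (0:ℝ), ρ (Ioi t) * R t
            = ∫⁻ t in Ioi (0:ℝ), (∫⁻ u, (Ioi t).indicator (fun _ => R t) u ∂ρ) := by
              apply lintegral_congr
              intro t
              rw [lintegral_indicator_const measurableSet_Ioi, mul_comm]
          _ = ∫⁻ u, (∫⁻ t in Ioi (0:ℝ), (Ioi t).indicator (fun _ => R t) u) ∂ρ := by
              apply lintegral_lintegral_swap
                (f := fun (t u : ℝ) => (Ioi t).indicator (fun _ => R t) u)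
              have heq : (Function.uncurry fun (t u : ℝ) => (Ioi t).indicator (fun _ => R t) u)
                  = fun p : ℝ × ℝ => if p.1 < p.2 then R p.1 else 0 := by
                funext p
                simp [Function.uncurry, Set.indicator_apply]
              rw [heq]
              exact (Measurable.ite (measurableSet_lt measurable_fst measurable_snd)
                (hR.comp measurable_fst) measurable_const).aemeasurable
          _ = ∫⁻ u, (∫⁻ t in Ioi (0:ℝ) ∩ Iio u, R t) ∂ρ := by
              apply lintegral_congr
              intro u
              have heq : ∀ t, (Ioi t).indicator (fun _ => R t) u = (Iio u).indicator R t := by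
                intro t
                simp only [Set.indicator_apply, mem_Ioi, mem_Iio]
              rw [lintegral_congr heq, lintegral_indicator measurableSet_Iio,
                Measure.restrict_restrict measurableSet_Iio, inter_comm]

end Step

/-- If `φ : (0, ∞) → ℝ` is right continuous, nonnegative and
nonincreasing, then the operator `f ↦ ∫₀^∞ φ(t) f*(t) dt` is subadditive:
`∫₀^∞ φ(t) (f+g)*(t) dt ≤ ∫₀^∞ φ(t) f*(t) dt + ∫₀^∞ φ(t) g*(t) dt`. -/
theorem stmt11 {k : ℕ} {𝕜 : Type*} [RCLike 𝕜]
    (Ω : Set (EuclideanSpace ℝ (Fin k))) (hΩ : IsOpen Ω)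
    (φ : ℝ → ℝ)
    (hφ_rc : ∀ t : ℝ, 0 < t → ContinuousWithinAt φ (Set.Ici t) t)
    (hφ_nonneg : ∀ t : ℝ, 0 < t → 0 ≤ φ t)
    (hφ_anti : AntitoneOn φ (Set.Ioi 0))
    (f g : EuclideanSpace ℝ (Fin k) → 𝕜) (hf : Measurable f) (hg : Measurable g) :
    ∫⁻ t in Set.Ioi (0 : ℝ), ENNReal.ofReal (φ t) * rearrFn Ω (fun x => f x + g x) t ≤
      (∫⁻ t in Set.Ioi (0 : ℝ), ENNReal.ofReal (φ t) * rearrFn Ω f t) +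
        ∫⁻ t in Set.Ioi (0 : ℝ), ENNReal.ofReal (φ t) * rearrFn Ω g t := by
  have hΩm : MeasurableSet Ω := hΩ.measurableSet
  have hfg : Measurable fun x => f x + g x := hf.add hg
  set R₁ := rearrFn Ω f with hR₁def
  set R₂ := rearrFn Ω g with hR₂def
  set R₃ := rearrFn Ω (fun x => f x + g x) with hR₃def
  have hR₁m : Measurable R₁ := rearr_measurable Ω f
  have hR₂m : Measurable R₂ := rearr_measurable Ω g
  have hR₃m : Measurable R₃ := rearr_measurable Ω _
  have hanti : ∀ n, Antitone (psi φ n) := psi_anti hφ_anti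
  have hrc : ∀ n x, ContinuousWithinAt (psi φ n) (Ici x) x := fun n => psi_rc hφ_rc n
  have hnn : ∀ n t, 0 ≤ psi φ n t := psi_nonneg hφ_nonneg
  have key : ∀ n : ℕ, ∫⁻ t in Ioi (0:ℝ), ENNReal.ofReal (psi φ n t) * R₃ t ≤
      (∫⁻ t in Ioi (0:ℝ), ENNReal.ofReal (φ t) * R₁ t) +
        ∫⁻ t in Ioi (0:ℝ), ENNReal.ofReal (φ t) * R₂ t := by
    intro n
    set ρ := (negStj (psi φ n) (hanti n) (hrc n)).measure with hρdef
    set L := ENNReal.ofReal (⨅ t, psi φ n t) with hLdef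
    have hA₁m : Measurable fun u => ∫⁻ t in Ioi (0:ℝ) ∩ Iio u, R₁ t := by
      apply Monotone.measurable
      intro u₁ u₂ h
      exact lintegral_mono_set (inter_subset_inter_right _ (Iio_subset_Iio h))
    have hmono_i : ∀ (R : ℝ → ℝ≥0∞), Measurable R →
        ∫⁻ t in Ioi (0:ℝ), ENNReal.ofReal (psi φ n t) * R t
          ≤ ∫⁻ t in Ioi (0:ℝ), ENNReal.ofReal (φ t) * R t := by
      intro R hR
      apply lintegral_mono_ae
      rw [ae_restrict_iff' measurableSet_Ioi]
      apply ae_of_all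
      intro t ht
      exact mul_le_mul_left (ENNReal.ofReal_le_ofReal (psi_le hφ_anti n ht)) _
    calc ∫⁻ t in Ioi (0:ℝ), ENNReal.ofReal (psi φ n t) * R₃ t
        = L * (∫⁻ t in Ioi (0:ℝ), R₃ t) + ∫⁻ u, (∫⁻ t in Ioi (0:ℝ) ∩ Iio u, R₃ t) ∂ρ :=
          step (hanti n) (hrc n) (hnn n) hR₃m
      _ ≤ L * ((∫⁻ t in Ioi (0:ℝ), R₁ t) + ∫⁻ t in Ioi (0:ℝ), R₂ t)
          + ∫⁻ u, ((∫⁻ t in Ioi (0:ℝ) ∩ Iio u, R₁ t) + ∫⁻ t in Ioi (0:ℝ) ∩ Iio u, R₂ t) ∂ρ := by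
          apply add_le_add
          · apply mul_le_mul_right
            have h := core hΩm hf hg ⊤
            rw [So_top] at h
            exact h
          · apply lintegral_mono
            intro u
            have h := core hΩm hf hg (ENNReal.ofReal u)
            rw [So_ofReal] at h
            exact h
      _ = (L * (∫⁻ t in Ioi (0:ℝ), R₁ t) + ∫⁻ u, (∫⁻ t in Ioi (0:ℝ) ∩ Iio u, R₁ t) ∂ρ)
          + (L * (∫⁻ t in Ioi (0:ℝ), R₂ t) + ∫⁻ u, (∫⁻ t in Ioi (0:ℝ) ∩ Iio u, R₂ t) ∂ρ) := by
          rw [mul_add, lintegral_add_left hA₁m]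
          abel
      _ = (∫⁻ t in Ioi (0:ℝ), ENNReal.ofReal (psi φ n t) * R₁ t)
          + ∫⁻ t in Ioi (0:ℝ), ENNReal.ofReal (psi φ n t) * R₂ t := by
          rw [← step (hanti n) (hrc n) (hnn n) hR₁m, ← step (hanti n) (hrc n) (hnn n) hR₂m]
      _ ≤ _ := add_le_add (hmono_i R₁ hR₁m) (hmono_i R₂ hR₂m)
  have hmct : ∫⁻ t in Ioi (0:ℝ), ENNReal.ofReal (φ t) * R₃ t
      = ⨆ n : ℕ, ∫⁻ t in Ioi (0:ℝ), ENNReal.ofReal (psi φ n t) * R₃ t := by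
    calc ∫⁻ t in Ioi (0:ℝ), ENNReal.ofReal (φ t) * R₃ t
        = ∫⁻ t in Ioi (0:ℝ), ⨆ n : ℕ, ENNReal.ofReal (psi φ n t) * R₃ t := by
          apply lintegral_congr_ae
          rw [Filter.EventuallyEq, ae_restrict_iff' measurableSet_Ioi]
          apply ae_of_all
          intro t ht
          rw [← ENNReal.iSup_mul, psi_sup hφ_anti ht]
      _ = ⨆ n : ℕ, ∫⁻ t in Ioi (0:ℝ), ENNReal.ofReal (psi φ n t) * R₃ t := by
          apply lintegral_iSup'
          · exact fun n => ((hanti n).measurable.ennreal_ofReal.mul hR₃m).aemeasurable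
          · apply ae_of_all
            intro t n m hnm
            exact mul_le_mul_left
              (ENNReal.ofReal_le_ofReal (psi_mono_n hφ_anti t hnm)) _
  rw [hmct]
  exact iSup_le key
end
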